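/- arXiv:math/9905149 — 4 statements merged into one kernel-verified Lean document; each statement's English description precedes it below -/
import Mathlib

section
/- The number of unipotent elements of GL(n,p) is p^{n(n-1)}. -/
/-!
Subtracting `1` turns unipotent matrices into nilpotent ones, so it suffices to count the
nilpotent endomorphisms of `V = F^d`, where `q = |F|`. By Fitting's lemma
`V = ker f^d ⊕ range f^d`, with `f` nilpotent on the first summand and invertible on the second,
and such data determine `f`: endomorphisms of `V` correspond to splittings `V = U ⊕ W` together
with a nilpotent endomorphism of `U` and an automorphism of `W`. Likewise an isomorphism
`F^k × F^(d-k) ≃ V` is a splitting with `dim U = k` together with isomorphisms `F^k ≃ U` and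
`F^(d-k) ≃ W`, so there are `|GL_d| / (|GL_k| |GL_(d-k)|)` such splittings. Counting `End V` thus
gives `∑_{k ≤ d} ν_k / |GL_k| = q^(d²) / |GL_d|` for the number `ν_k` of nilpotent endomorphisms
of `F^k`. Since `|GL_(d+1)| = |GL_d| q^d (q^(d+1) - 1)`, the numbers `q^(k(k-1))` satisfy the same
identities, and these identities for all `d` determine `ν`.
-/

open Matrix Module LinearMap Submodule

section Fitting

variable {F V : Type*} [Field F] [AddCommGroup V] [Module F V]

theorem ofIsCompl_subtype_comp_pow {U W : Submodule F V} (h : IsCompl U W)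
    (N : Module.End F U) (M : Module.End F W) (m : ℕ) :
    ofIsCompl h (U.subtype ∘ₗ N) (W.subtype ∘ₗ M) ^ m
      = ofIsCompl h (U.subtype ∘ₗ N ^ m) (W.subtype ∘ₗ M ^ m) := by
  induction m with
  | zero => exact (ofIsCompl_eq h (fun _ => rfl) fun _ => rfl).symm
  | succ m ih =>
    refine (ofIsCompl_eq h (fun u => ?_) fun w => ?_).symm <;> simp [pow_succ, ih]

theorem mapsTo_of_ker_pow_eq {f : Module.End F V} {U : Submodule F V} {n : ℕ}
    (hU : ker (f ^ n) = U) : ∀ x ∈ U, f x ∈ U := by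
  subst hU
  intro x hx
  rw [mem_ker, ← Module.End.mul_apply, ← pow_succ, pow_succ', Module.End.mul_apply, hx, map_zero]

theorem mapsTo_of_range_pow_eq {f : Module.End F V} {W : Submodule F V} {n : ℕ}
    (hW : range (f ^ n) = W) : ∀ x ∈ W, f x ∈ W := by
  subst hW
  rintro _ ⟨y, rfl⟩
  exact ⟨f y, by rw [← Module.End.mul_apply, ← pow_succ, pow_succ', Module.End.mul_apply]⟩

theorem isNilpotent_restrict_of_ker_pow_eq {f : Module.End F V} {U : Submodule F V} {n : ℕ}
    (hU : ker (f ^ n) = U) (hfU : ∀ x ∈ U, f x ∈ U) : IsNilpotent (f.restrict hfU) := by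
  refine ⟨n, LinearMap.ext fun x => Subtype.ext ?_⟩
  rw [Module.End.pow_restrict, restrict_apply, LinearMap.zero_apply, ZeroMemClass.coe_zero,
    ← mem_ker, hU]
  exact x.2

variable [FiniteDimensional F V]

theorem isCompl_ker_pow_finrank_range_pow_finrank (f : Module.End F V) :
    IsCompl (ker (f ^ finrank F V)) (range (f ^ finrank F V)) := by
  refine (isCompl_iff_disjoint _ _ (by rw [add_comm, finrank_range_add_finrank_ker])).2 ?_
  rw [Submodule.disjoint_def]
  rintro _ hx ⟨y, rfl⟩
  have : y ∈ ker (f ^ (finrank F V + finrank F V)) := by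
    rwa [mem_ker, pow_add, Module.End.mul_apply]
  rwa [Module.End.ker_pow_eq_ker_pow_finrank_of_le le_add_self] at this

theorem IsNilpotent.pow_eq_zero_of_finrank_le {f : Module.End F V} (hf : IsNilpotent f) {m : ℕ}
    (hm : finrank F V ≤ m) : f ^ m = 0 := by
  refine pow_eq_zero_of_le hm ?_
  simpa [hf.charpoly_eq_X_pow_finrank] using f.aeval_self_charpoly

theorem injective_restrict_of_range_pow_finrank_eq {f : Module.End F V} {W : Submodule F V}
    (hW : range (f ^ finrank F V) = W) (hfW : ∀ x ∈ W, f x ∈ W) :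
    Function.Injective (f.restrict hfW) := by
  subst hW
  rw [← ker_eq_bot, eq_bot_iff]
  rintro ⟨_, y, rfl⟩ hy
  have hy : y ∈ ker (f ^ (finrank F V + 1)) := by
    simpa [pow_succ', Subtype.ext_iff] using hy
  rw [Module.End.ker_pow_eq_ker_pow_finrank_of_le (Nat.le_succ _)] at hy
  exact (Submodule.mem_bot F).2 (Subtype.ext hy)

variable (F V) in
abbrev ComplPair := {p : Submodule F V × Submodule F V // IsCompl p.1 p.2}

noncomputable def fittingPair (f : Module.End F V) : ComplPair F V :=
  ⟨(ker (f ^ finrank F V), range (f ^ finrank F V)), isCompl_ker_pow_finrank_range_pow_finrank f⟩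

noncomputable def fittingFiberEquiv {U W : Submodule F V} (h : IsCompl U W) :
    {f : Module.End F V // ker (f ^ finrank F V) = U ∧ range (f ^ finrank F V) = W} ≃
      {N : Module.End F U // IsNilpotent N} × (W ≃ₗ[F] W) where
  toFun f :=
    have hfU := mapsTo_of_ker_pow_eq f.2.1
    have hfW := mapsTo_of_range_pow_eq f.2.2
    (⟨f.1.restrict hfU, isNilpotent_restrict_of_ker_pow_eq f.2.1 hfU⟩,
      LinearEquiv.ofInjectiveEndo _ (injective_restrict_of_range_pow_finrank_eq f.2.2 hfW))
  invFun Nc := ⟨ofIsCompl h (U.subtype ∘ₗ Nc.1.1) (W.subtype ∘ₗ Nc.2.toLinearMap), by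
    have hNd : Nc.1.1 ^ finrank F V = 0 :=
      Nc.1.2.pow_eq_zero_of_finrank_le (Submodule.finrank_le U)
    have hg : ofIsCompl h (U.subtype ∘ₗ Nc.1.1) (W.subtype ∘ₗ Nc.2.toLinearMap) ^ finrank F V
        = W.subtype ∘ₗ (Nc.2 ^ finrank F V).toLinearMap ∘ₗ W.projectionOnto U h.symm := by
      rw [ofIsCompl_subtype_comp_pow, hNd, ofIsCompl_eq_add]
      ext
      simp [LinearEquiv.coe_pow, Module.End.coe_pow]
    rw [hg, ker_comp_of_ker_eq_bot _ (ker_subtype W), ker_comp_of_ker_eq_bot _ (LinearEquiv.ker _),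
      ker_projectionOnto, range_comp_of_range_eq_top _ (range_comp_of_range_eq_top _
        (range_projectionOnto _) |>.trans (LinearEquiv.range _)), range_subtype]
    exact ⟨rfl, rfl⟩⟩
  left_inv f := Subtype.ext <| ofIsCompl_eq h (fun _ => rfl) fun _ => rfl
  right_inv Nc := Prod.ext (Subtype.ext <| LinearMap.ext fun u => by ext; simp)
    (LinearEquiv.ext fun w => by ext; simp)

noncomputable def fittingEquiv : Module.End F V ≃
    Σ p : ComplPair F V, {N : Module.End F p.1.1 // IsNilpotent N} × (p.1.2 ≃ₗ[F] p.1.2) :=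
  (Equiv.sigmaFiberEquiv fittingPair).symm.trans <| Equiv.sigmaCongrRight fun p =>
    (Equiv.subtypeEquivRight fun f => by simp [fittingPair, Subtype.ext_iff, Prod.ext_iff]).trans
      (fittingFiberEquiv p.2)

end Fitting

section Frames

variable {F V A B : Type*} [Field F] [AddCommGroup V] [Module F V]
  [AddCommGroup A] [Module F A] [AddCommGroup B] [Module F B]

theorem isCompl_range_comp_inl_range_comp_inr (e : (A × B) ≃ₗ[F] V) :
    IsCompl (range (e.toLinearMap ∘ₗ inl F A B)) (range (e.toLinearMap ∘ₗ inr F A B)) := by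
  constructor
  · refine Submodule.disjoint_def.2 ?_
    rintro _ ⟨a, rfl⟩ ⟨b, hb⟩
    have := congrArg Prod.fst (e.injective hb)
    simp_all
  · rw [codisjoint_iff, eq_top_iff]
    intro x _
    obtain ⟨⟨a, b⟩, rfl⟩ := e.surjective x
    exact Submodule.mem_sup.2 ⟨e (a, 0), ⟨a, rfl⟩, e (0, b), ⟨b, rfl⟩, by rw [← map_add]; simp⟩

def framePair (e : (A × B) ≃ₗ[F] V) : ComplPair F V :=
  ⟨(range (e.toLinearMap ∘ₗ inl F A B), range (e.toLinearMap ∘ₗ inr F A B)),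
    isCompl_range_comp_inl_range_comp_inr e⟩

noncomputable def frameFiberEquiv {U W : Submodule F V} (h : IsCompl U W) :
    {e : (A × B) ≃ₗ[F] V // range (e.toLinearMap ∘ₗ inl F A B) = U ∧
      range (e.toLinearMap ∘ₗ inr F A B) = W} ≃ (A ≃ₗ[F] U) × (B ≃ₗ[F] W) where
  toFun e :=
    (LinearEquiv.ofInjective _ (e.1.injective.comp inl_injective) ≪≫ₗ LinearEquiv.ofEq _ _ e.2.1,
      LinearEquiv.ofInjective _ (e.1.injective.comp inr_injective) ≪≫ₗ LinearEquiv.ofEq _ _ e.2.2)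
  invFun αβ := ⟨(αβ.1.prodCongr αβ.2) ≪≫ₗ prodEquivOfIsCompl U W h, by
    have hinl : ((αβ.1.prodCongr αβ.2) ≪≫ₗ prodEquivOfIsCompl U W h).toLinearMap ∘ₗ inl F A B
        = U.subtype ∘ₗ αβ.1.toLinearMap := by ext; simp
    have hinr : ((αβ.1.prodCongr αβ.2) ≪≫ₗ prodEquivOfIsCompl U W h).toLinearMap ∘ₗ inr F A B
        = W.subtype ∘ₗ αβ.2.toLinearMap := by ext; simp
    rw [hinl, hinr, range_comp_of_range_eq_top _ (LinearEquiv.range _),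
      range_comp_of_range_eq_top _ (LinearEquiv.range _), range_subtype, range_subtype]
    exact ⟨rfl, rfl⟩⟩
  left_inv e := Subtype.ext <| LinearEquiv.ext fun z => by
    simp [← map_add]
  right_inv αβ := Prod.ext (LinearEquiv.ext fun a => Subtype.ext (by simp))
    (LinearEquiv.ext fun b => Subtype.ext (by simp))

noncomputable def frameEquiv :
    ((A × B) ≃ₗ[F] V) ≃ Σ p : ComplPair F V, (A ≃ₗ[F] p.1.1) × (B ≃ₗ[F] p.1.2) :=
  (Equiv.sigmaFiberEquiv framePair).symm.trans <| Equiv.sigmaCongrRight fun p =>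
    (Equiv.subtypeEquivRight fun e => by simp [framePair, Subtype.ext_iff, Prod.ext_iff]).trans
      (frameFiberEquiv p.2)

end Frames

instance {R M N : Type*} [Semiring R] [AddCommMonoid M] [AddCommMonoid N] [Module R M]
    [Module R N] [Finite M] [Finite N] : Finite (M →ₗ[R] N) :=
  Finite.of_injective _ DFunLike.coe_injective

instance {R M N : Type*} [Semiring R] [AddCommMonoid M] [AddCommMonoid N] [Module R M]
    [Module R N] [Finite M] [Finite N] : Finite (M ≃ₗ[R] N) :=
  Finite.of_injective _ DFunLike.coe_injective

section Isomorphisms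

variable {F A B : Type*} [Field F] [AddCommGroup A] [Module F A] [AddCommGroup B] [Module F B]

theorem card_nilpotent_congr (e : A ≃ₗ[F] B) :
    Nat.card {f : Module.End F A // IsNilpotent f} =
      Nat.card {f : Module.End F B // IsNilpotent f} :=
  Nat.card_congr <| (e.conjAlgEquiv F).toEquiv.subtypeEquiv fun _ =>
    (IsNilpotent.map_iff (e.conjAlgEquiv F).injective).symm

theorem card_linearEquiv_of_finrank_eq [FiniteDimensional F A] [FiniteDimensional F B] {k : ℕ}
    (hA : finrank F A = k) (hB : finrank F B = k) :
    Nat.card (A ≃ₗ[F] B) = Nat.card (GL (Fin k) F) := by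
  have hk : finrank F (Fin k → F) = k := by simp
  let eA := LinearEquiv.ofFinrankEq A (Fin k → F) (hA.trans hk.symm)
  let eB := LinearEquiv.ofFinrankEq B (Fin k → F) (hB.trans hk.symm)
  calc Nat.card (A ≃ₗ[F] B) = Nat.card ((Fin k → F) ≃ₗ[F] (Fin k → F)) :=
        Nat.card_congr
          { toFun e := eA.symm ≪≫ₗ e ≪≫ₗ eB
            invFun e := eA ≪≫ₗ e ≪≫ₗ eB.symm
            left_inv e := by ext; simp
            right_inv e := by ext; simp }
    _ = Nat.card (GL (Fin k) F) :=
        Nat.card_congr (Matrix.GeneralLinearGroup.toLin.trans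
          (LinearMap.GeneralLinearGroup.generalLinearEquiv F _)).toEquiv.symm

theorem card_linearEquiv_of_finrank_ne (h : finrank F A ≠ finrank F B) :
    Nat.card (A ≃ₗ[F] B) = 0 :=
  haveI : IsEmpty (A ≃ₗ[F] B) := ⟨fun e => h e.finrank_eq⟩
  Nat.card_of_isEmpty

end Isomorphisms

theorem eq_of_forall_sum_range_eq {M : Type*} [AddCommGroup M] {a b : ℕ → M}
    (h : ∀ n, ∑ k ∈ Finset.range n, a k = ∑ k ∈ Finset.range n, b k) (n : ℕ) : a n = b n := by
  rw [← Finset.sum_range_succ_sub_sum a, h, h, Finset.sum_range_succ_sub_sum]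

section Counting

variable {F : Type*} [Field F] [Fintype F]

local notation "q" => Fintype.card F

theorem card_end (A : Type*) [AddCommGroup A] [Module F A] [FiniteDimensional F A] :
    Nat.card (Module.End F A) = q ^ (finrank F A * finrank F A) := by
  have : Finite A := Module.finite_of_finite F
  let := Fintype.ofFinite (Module.End F A)
  rw [Nat.card_eq_fintype_card, Module.card_eq_pow_finrank (K := F), finrank_linearMap]

theorem card_GL_succ (d : ℕ) :
    Nat.card (GL (Fin (d + 1)) F) = Nat.card (GL (Fin d) F) * (q ^ d * (q ^ (d + 1) - 1)) := by
  have hsucc (i : Fin d) : q ^ (d + 1) - q ^ (i.succ : ℕ) = q * (q ^ d - q ^ (i : ℕ)) := by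
    rw [Fin.val_succ, pow_succ', pow_succ', Nat.mul_sub]
  rw [Matrix.card_GL_field, Matrix.card_GL_field, Fin.prod_univ_succ, Finset.prod_congr rfl
    fun i _ => hsucc i, Finset.prod_mul_distrib, Finset.prod_const, Finset.card_univ,
    Fintype.card_fin, Fin.val_zero, pow_zero]
  ring

theorem card_GL_pos (d : ℕ) : 0 < Nat.card (GL (Fin d) F) := Nat.card_pos

theorem sum_pow_div_card_GL (d : ℕ) :
    ∑ k ∈ Finset.range (d + 1), (q : ℚ) ^ (k * (k - 1)) / Nat.card (GL (Fin k) F)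
      = q ^ (d * d) / Nat.card (GL (Fin d) F) := by
  induction d with
  | zero => simp
  | succ d ih =>
    have hq : (1 : ℚ) < q := by exact_mod_cast Fintype.one_lt_card
    have hg : (0 : ℚ) < Nat.card (GL (Fin d) F) := by exact_mod_cast card_GL_pos d
    have hq' : (q : ℚ) ^ (d + 1) - 1 ≠ 0 :=
      (sub_pos.2 (one_lt_pow₀ hq (Nat.succ_ne_zero d))).ne'
    rw [Finset.sum_range_succ, ih, card_GL_succ, Nat.add_sub_cancel, Nat.cast_mul, Nat.cast_mul,
      Nat.cast_sub (Nat.one_le_pow _ _ Fintype.card_pos), Nat.cast_pow, Nat.cast_pow, Nat.cast_one]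
    field_simp
    ring

variable {V : Type*} [AddCommGroup V] [Module F V] [FiniteDimensional F V]

-- Only the summand `k = finrank F U` is nonzero; the sum form lets the sum over all splittings
-- be exchanged with the sum over `k`.
theorem card_nilpotent_mul_card_aut_eq_sum {U W : Submodule F V} (h : IsCompl U W) :
    (Nat.card {f : Module.End F U // IsNilpotent f} * Nat.card (W ≃ₗ[F] W) : ℚ) =
      ∑ k ∈ Finset.range (finrank F V + 1),
        (Nat.card {f : Module.End F (Fin k → F) // IsNilpotent f} : ℚ) / Nat.card (GL (Fin k) F) *
          (Nat.card ((Fin k → F) ≃ₗ[F] U) * Nat.card ((Fin (finrank F V - k) → F) ≃ₗ[F] W)) := by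
  have hj : finrank F U ≤ finrank F V := Submodule.finrank_le U
  have hW : finrank F W = finrank F V - finrank F U := by
    rw [← Submodule.finrank_add_eq_of_isCompl h]; omega
  rw [Finset.sum_eq_single (finrank F U)]
  · rw [card_nilpotent_congr (LinearEquiv.ofFinrankEq U (Fin (finrank F U) → F) (by simp)),
      card_linearEquiv_of_finrank_eq hW hW,
      card_linearEquiv_of_finrank_eq (A := Fin _ → F) (by simp) hW,
      card_linearEquiv_of_finrank_eq (A := Fin _ → F) (B := U) (by simp) rfl]
    field_simp [(card_GL_pos (F := F) (finrank F U)).ne']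
  · intro k _ hk
    rw [card_linearEquiv_of_finrank_ne (by simpa using hk), Nat.cast_zero, zero_mul, mul_zero]
  · exact fun hj' => absurd (Finset.mem_range.2 (Nat.lt_succ_of_le hj)) hj'

variable (V) in
theorem sum_card_nilpotent_div_card_GL :
    ∑ k ∈ Finset.range (finrank F V + 1),
        (Nat.card {f : Module.End F (Fin k → F) // IsNilpotent f} : ℚ) / Nat.card (GL (Fin k) F)
      = q ^ (finrank F V * finrank F V) / Nat.card (GL (Fin (finrank F V)) F) := by
  have : Finite V := Module.finite_of_finite F
  let := Fintype.ofFinite (ComplPair F V)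
  have hend : (q : ℚ) ^ (finrank F V * finrank F V) = ∑ p : ComplPair F V,
      (Nat.card {f : Module.End F p.1.1 // IsNilpotent f} * Nat.card (p.1.2 ≃ₗ[F] p.1.2) : ℚ) := by
    rw [← Nat.cast_pow, ← card_end, Nat.card_congr fittingEquiv, Nat.card_sigma]
    push_cast [Nat.card_prod]
    rfl
  have hframes (k : ℕ) (hk : k ≤ finrank F V) :
      (Nat.card (GL (Fin (finrank F V)) F) : ℚ) = ∑ p : ComplPair F V,
        (Nat.card ((Fin k → F) ≃ₗ[F] p.1.1) *
          Nat.card ((Fin (finrank F V - k) → F) ≃ₗ[F] p.1.2) : ℚ) := by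
    rw [← card_linearEquiv_of_finrank_eq (A := (Fin k → F) × (Fin (finrank F V - k) → F))
      (B := V) (by simp; omega) rfl, Nat.card_congr frameEquiv, Nat.card_sigma]
    push_cast [Nat.card_prod]
    rfl
  rw [eq_div_iff (by exact_mod_cast (card_GL_pos _).ne'), hend,
    Finset.sum_congr rfl fun p _ => card_nilpotent_mul_card_aut_eq_sum p.2, Finset.sum_comm,
    Finset.sum_mul]
  refine Finset.sum_congr rfl fun k hk => ?_
  rw [← Finset.mul_sum, hframes k (Nat.lt_succ_iff.1 (Finset.mem_range.1 hk))]

theorem card_nilpotent_end (V : Type*) [AddCommGroup V] [Module F V] [FiniteDimensional F V] :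
    Nat.card {f : Module.End F V // IsNilpotent f} = q ^ (finrank F V * (finrank F V - 1)) := by
  have hsum (d : ℕ) : ∑ k ∈ Finset.range d,
        (Nat.card {f : Module.End F (Fin k → F) // IsNilpotent f} : ℚ) / Nat.card (GL (Fin k) F)
      = ∑ k ∈ Finset.range d, (q : ℚ) ^ (k * (k - 1)) / Nat.card (GL (Fin k) F) := by
    cases d with
    | zero => rfl
    | succ d =>
      have := sum_card_nilpotent_div_card_GL (F := F) (Fin d → F)
      rw [Module.finrank_fin_fun] at this
      rw [this, sum_pow_div_card_GL]
  have hterm := eq_of_forall_sum_range_eq hsum (finrank F V)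
  rw [card_nilpotent_congr (LinearEquiv.ofFinrankEq V (Fin (finrank F V) → F) (by simp))]
  exact_mod_cast (div_left_inj' (by exact_mod_cast (card_GL_pos _).ne')).1 hterm

end Counting

noncomputable def unitsIsNilpotentSubOneEquiv (R : Type*) [Ring R] :
    {u : Rˣ // IsNilpotent ((u : R) - 1)} ≃ {x : R // IsNilpotent x} where
  toFun u := ⟨(u.1 : R) - 1, u.2⟩
  invFun x := ⟨x.2.isUnit_one_add.unit, by simpa using x.2⟩
  left_inv u := Subtype.ext <| Units.ext <| add_sub_cancel _ _
  right_inv x := Subtype.ext <| add_sub_cancel_left _ _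

theorem Matrix.isNilpotent_iff_pow_eq_zero {K : Type*} [Field K] {n : ℕ}
    {M : Matrix (Fin n) (Fin n) K} : IsNilpotent M ↔ M ^ n = 0 := by
  refine ⟨fun hM => Matrix.toLinAlgEquiv'.injective ?_, fun hM => ⟨n, hM⟩⟩
  rw [map_pow, map_zero]
  exact ((IsNilpotent.map_iff Matrix.toLinAlgEquiv'.injective).2 hM).pow_eq_zero_of_finrank_le
    (by simp)

theorem steinberg_card_unipotent (p n : ℕ) [Fact p.Prime] :
    Nat.card {g : GL (Fin n) (ZMod p) //
        ((g : Matrix (Fin n) (Fin n) (ZMod p)) - 1) ^ n = 0}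
      = p ^ (n * (n - 1)) := by
  calc _ = Nat.card {N : Matrix (Fin n) (Fin n) (ZMod p) // IsNilpotent N} :=
        Nat.card_congr <| (Equiv.subtypeEquivRight fun _ => isNilpotent_iff_pow_eq_zero.symm).trans
          (unitsIsNilpotentSubOneEquiv _)
    _ = Nat.card {f : Module.End (ZMod p) (Fin n → ZMod p) // IsNilpotent f} :=
        Nat.card_congr <| toLinAlgEquiv'.toEquiv.subtypeEquiv fun _ =>
          (IsNilpotent.map_iff toLinAlgEquiv'.injective).symm
    _ = p ^ (n * (n - 1)) := by rw [card_nilpotent_end, Module.finrank_fin_fun, ZMod.card]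
end

section
/- In an abelian p-group of type λ, the number of cyclic subgroups of order p^r (for r ≥ 1) is (p^{λ'_1+...+λ'_r} - p^{λ'_1+...+λ'_{r-1}})/(p^r - p^{r-1}). -/
/-- `(x)_m` q-Pochhammer style product `∏_{j=1}^m (1 - p^{-j})`. -/
noncomputable def qPoch (p : ℝ) (m : ℕ) : ℝ := ∏ j ∈ Finset.range m, (1 - p⁻¹ ^ (j + 1))

/-- The conjugate partition: `conjPart λ j = λ'_j = #{parts of λ that are ≥ j}`. -/
def conjPart {n : ℕ} (lam : n.Partition) (j : ℕ) : ℕ :=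
  (lam.parts.filter (fun a => j ≤ a)).card

/-- The quantity `p^{Σ_i (λ'_i)²} · Π_i (1/p)_{m_i(λ)}`. -/
noncomputable def partitionWeight (p : ℝ) {n : ℕ} (lam : n.Partition) : ℝ :=
  p ^ (∑ i ∈ Finset.range n, (conjPart lam (i + 1)) ^ 2) *
    ∏ i ∈ Finset.range n, qPoch p (lam.parts.count (i + 1))

/-- The abelian `p`-group of type `λ`: `⊕ᵢ ℤ/p^{λᵢ}ℤ`. -/
abbrev GroupOfType (p : ℕ) {n : ℕ} (lam : n.Partition) : Type :=
  ∀ i : Fin lam.parts.toList.length, ZMod (p ^ lam.parts.toList.get i)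

/-!
An element of order `p ^ r` generates a cyclic subgroup of order `p ^ r`, and such a subgroup has
`φ (p ^ r) = p ^ r - p ^ (r - 1)` generators; so the number of such subgroups times this totient
is the number of elements of order `p ^ r`. These are the elements killed by `p ^ r` but not by
`p ^ (r - 1)`, and in `⊕ᵢ ℤ/p^{λᵢ}ℤ` the `p ^ s`-torsion has
`∏ᵢ p ^ min s λᵢ = p ^ (λ'₁ + ⋯ + λ'ₛ)` elements.
-/

open Finset AddSubgroup

lemma ZMod.card_addOrderOf_eq_self (m : ℕ) [NeZero m] :
    Nat.card {b : ZMod m // addOrderOf b = m} = m.totient := by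
  classical
  rw [Nat.card_eq_fintype_card, Fintype.card_subtype]
  simpa using IsAddCyclic.card_addOrderOf_eq_totient (α := ZMod m) (ZMod.card m).symm.dvd

section CyclicSubgroups

variable {G : Type*} [AddGroup G] [Finite G]

lemma AddSubgroup.zmultiples_eq_of_addOrderOf_eq_card {A : AddSubgroup G} {x : G} (hx : x ∈ A)
    (h : addOrderOf x = Nat.card A) : zmultiples x = A :=
  eq_of_le_of_card_ge (zmultiples_le.2 hx) (by rw [Nat.card_zmultiples, h])

lemma AddSubgroup.nonempty_addEquiv_zmod_iff {A : AddSubgroup G} {m : ℕ} :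
    Nonempty (A ≃+ ZMod m) ↔ ∃ x, addOrderOf x = m ∧ zmultiples x = A := by
  constructor
  · rintro ⟨e⟩
    have hord : addOrderOf ((e.symm 1 : A) : G) = m := by
      rw [addOrderOf_coe, e.symm.addOrderOf_eq, ZMod.addOrderOf_one]
    refine ⟨e.symm 1, hord, zmultiples_eq_of_addOrderOf_eq_card (e.symm 1).2 ?_⟩
    rw [hord, Nat.card_congr e.toEquiv, Nat.card_zmod]
  · rintro ⟨x, hx, rfl⟩
    exact ⟨addEquivOfAddCyclicCardEq (by rw [Nat.card_zmultiples, Nat.card_zmod, hx])⟩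

lemma card_addSubgroup_addEquiv_zmod_mul_totient {m : ℕ} (hm : m ≠ 0) :
    Nat.card {A : AddSubgroup G // Nonempty (A ≃+ ZMod m)} * m.totient
      = Nat.card {x : G // addOrderOf x = m} := by
  classical
  have : NeZero m := ⟨hm⟩
  have := Fintype.ofFinite {A : AddSubgroup G // Nonempty (A ≃+ ZMod m)}
  let span : {x : G // addOrderOf x = m} → {A : AddSubgroup G // Nonempty (A ≃+ ZMod m)} :=
    fun x => ⟨zmultiples x, nonempty_addEquiv_zmod_iff.2 ⟨x, x.2, rfl⟩⟩
  have hfiber : ∀ A, Nat.card {x // span x = A} = m.totient := by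
    rintro ⟨A, ⟨e⟩⟩
    have hspan : ∀ x, span x = ⟨A, ⟨e⟩⟩ → zmultiples (x : G) = A :=
      fun _ h => congrArg Subtype.val h
    have hcard : Nat.card A = m := by rw [Nat.card_congr e.toEquiv, Nat.card_zmod]
    let gens : {x // span x = ⟨A, ⟨e⟩⟩} ≃ {a : A // addOrderOf a = m} :=
      { toFun := fun x => ⟨⟨x.1, (hspan x.1 x.2).le (mem_zmultiples _)⟩,
          by rw [← addOrderOf_coe]; exact x.1.2⟩
        invFun := fun a => ⟨⟨a.1, by rw [addOrderOf_coe]; exact a.2⟩, Subtype.ext <|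
          zmultiples_eq_of_addOrderOf_eq_card a.1.2 (by rw [addOrderOf_coe, a.2, hcard])⟩
        left_inv := fun _ => rfl
        right_inv := fun _ => rfl }
    rw [Nat.card_congr (gens.trans (e.toEquiv.subtypeEquiv (q := (addOrderOf · = m))
      fun a => by rw [← e.addOrderOf_eq a]; rfl)), ZMod.card_addOrderOf_eq_self]
  rw [← Nat.card_congr (Equiv.sigmaFiberEquiv span), Nat.card_sigma, sum_congr rfl fun A _ =>
    hfiber A, sum_const, card_univ, smul_eq_mul, Nat.card_eq_fintype_card]

lemma card_addOrderOf_eq_prime_pow_succ {p : ℕ} (hp : p.Prime) (k : ℕ) :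
    Nat.card {x : G // addOrderOf x = p ^ (k + 1)}
      = Nat.card {x : G // p ^ (k + 1) • x = 0} - Nat.card {x : G // p ^ k • x = 0} := by
  have := Fact.mk hp
  have hsub : {x : G | p ^ k • x = 0} ⊆ {x | p ^ (k + 1) • x = 0} := fun x hx => by
    rw [Set.mem_ofPred_eq, pow_succ', mul_nsmul', hx, nsmul_zero]
  have hdiff : {x : G | addOrderOf x = p ^ (k + 1)}
      = {x | p ^ (k + 1) • x = 0} \ {x | p ^ k • x = 0} := by
    ext x
    refine ⟨fun h => ⟨h ▸ addOrderOf_nsmul_eq_zero x, fun hk => ?_⟩,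
      fun h => addOrderOf_eq_prime_pow h.2 h.1⟩
    have := (Nat.pow_dvd_pow_iff_le_right hp.one_lt).1 (h ▸ addOrderOf_dvd_of_nsmul_eq_zero hk)
    omega
  change Nat.card {x | _} = Nat.card {x | _} - Nat.card {x | _}
  simp only [Nat.card_coe_set_eq, hdiff, Set.ncard_sdiff hsub]

end CyclicSubgroups

lemma IsAddCyclic.card_nsmul_eq_zero_of_dvd {α : Type*} [AddGroup α] [Finite α] [IsAddCyclic α]
    {d : ℕ} (hd : d ∣ Nat.card α) : Nat.card {x : α // d • x = 0} = d := by
  classical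
  have := Fintype.ofFinite α
  have hd0 : d ≠ 0 := ne_zero_of_dvd_ne_zero Nat.card_pos.ne' hd
  calc Nat.card {x : α // d • x = 0}
      = ∑ e ∈ d.divisors, #{x : α | addOrderOf x = e} := by
        rw [sum_card_addOrderOf_eq_card_nsmul_eq_zero hd0, Nat.card_eq_fintype_card,
          Fintype.card_subtype]
    _ = ∑ e ∈ d.divisors, e.totient := sum_congr rfl fun e he =>
        IsAddCyclic.card_addOrderOf_eq_totient <|
          (Nat.dvd_of_mem_divisors he).trans (Nat.card_eq_fintype_card (α := α) ▸ hd)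
    _ = d := Nat.sum_totient d

lemma ZMod.card_nsmul_eq_zero (m : ℕ) [NeZero m] (n : ℕ) :
    Nat.card {x : ZMod m // n • x = 0} = n.gcd m := by
  have hgcd : ∀ x : ZMod m, n • x = 0 ↔ n.gcd m • x = 0 := fun x => by
    rw [gcd_nsmul_eq_zero, and_iff_left (by simp [nsmul_eq_mul])]
  rw [Nat.card_congr (Equiv.subtypeEquivRight hgcd),
    IsAddCyclic.card_nsmul_eq_zero_of_dvd (by rw [Nat.card_zmod]; exact Nat.gcd_dvd_right n m)]

lemma Nat.gcd_pow_pow (p s v : ℕ) : (p ^ s).gcd (p ^ v) = p ^ min s v := by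
  rcases le_total s v with h | h
  · rw [min_eq_left h, Nat.gcd_eq_left (pow_dvd_pow p h)]
  · rw [min_eq_right h, Nat.gcd_eq_right (pow_dvd_pow p h)]

lemma card_nsmul_eq_zero_pi {ι : Type*} [Fintype ι] {G : ι → Type*} [∀ i, AddMonoid (G i)]
    (n : ℕ) :
    Nat.card {x : ∀ i, G i // n • x = 0} = ∏ i, Nat.card {y : G i // n • y = 0} :=
  (Nat.card_congr <|
    (Equiv.subtypeEquivRight (p := (n • · = 0)) (q := fun x => ∀ i, n • x i = 0)
      fun _ => funext_iff).trans (Equiv.subtypePiEquivPi (p := fun _ y => n • y = 0))).trans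
    Nat.card_pi

lemma sum_range_card_filter_succ_le_eq_sum_map_min (M : Multiset ℕ) (s : ℕ) :
    ∑ j ∈ range s, (M.filter (j + 1 ≤ ·)).card = (M.map (min s)).sum := by
  induction M using Multiset.induction_on with
  | empty => simp
  | cons a M ih =>
    have hrange : {j ∈ range s | j + 1 ≤ a} = range (min s a) := by
      ext j
      simp only [mem_filter, mem_range, lt_min_iff]
      omega
    simp only [Multiset.filter_cons, Multiset.map_cons, Multiset.sum_cons, Multiset.card_add,
      sum_add_distrib, ih, apply_ite Multiset.card, Multiset.card_singleton, Multiset.card_zero,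
      ← card_filter, hrange, card_range]

lemma card_nsmul_eq_zero_groupOfType {p : ℕ} [NeZero p] {n : ℕ} (lam : n.Partition) (s : ℕ) :
    Nat.card {x : GroupOfType p lam // p ^ s • x = 0}
      = p ^ ∑ j ∈ range s, conjPart lam (j + 1) := by
  simp only [card_nsmul_eq_zero_pi, ZMod.card_nsmul_eq_zero, Nat.gcd_pow_pow, prod_pow_eq_pow_sum,
    conjPart, sum_range_card_filter_succ_le_eq_sum_map_min]
  conv_rhs => rw [← lam.parts.coe_toList, Multiset.map_coe, Multiset.sum_coe,
    ← List.ofFn_getElem_eq_map, List.sum_ofFn]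
  rfl

theorem card_cyclic_subgroups (p : ℕ) (hp : p.Prime) {n : ℕ} (lam : n.Partition)
    (r : ℕ) (hr : 1 ≤ r) :
    Nat.card {A : AddSubgroup (GroupOfType p lam) // Nonempty (A ≃+ ZMod (p ^ r))}
        * (p ^ r - p ^ (r - 1))
      = p ^ (∑ j ∈ Finset.range r, conjPart lam (j + 1))
        - p ^ (∑ j ∈ Finset.range (r - 1), conjPart lam (j + 1)) := by
  obtain ⟨k, rfl⟩ : ∃ k, r = k + 1 := ⟨r - 1, by omega⟩
  have : NeZero p := ⟨hp.ne_zero⟩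
  have htotient : (p ^ (k + 1)).totient = p ^ (k + 1) - p ^ k := by
    rw [Nat.totient_prime_pow_succ hp, Nat.mul_sub_one, pow_succ]
  rw [Nat.add_sub_cancel, ← htotient,
    card_addSubgroup_addEquiv_zmod_mul_totient (pow_ne_zero _ hp.ne_zero),
    card_addOrderOf_eq_prime_pow_succ hp, card_nsmul_eq_zero_groupOfType,
    card_nsmul_eq_zero_groupOfType]
end

section
/- Let a uniformly random unipotent element of GL(n,p) have Jordan type λ. For 1 ≤ r ≤ n, the expected value of (p^{λ'_1+...+λ'_r} - p^{λ'_1+...+λ'_{r-1}})/(p-1) equals p^r (1 - p^{-(n-r+1)})(1 - p^{-(n-r+2)})···(1 - p^{-n})/(p-1). -/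
/-- The probability that a uniformly random unipotent element of `GL(n,p)` has
Jordan type `λ`: `p^n (1/p)_n / (p^{Σ(λ'_i)²} Π_i (1/p)_{m_i(λ)})`. -/
noncomputable def unipMeasure (p : ℝ) {n : ℕ} (lam : n.Partition) : ℝ :=
  p ^ n * qPoch p n / partitionWeight p lam

/-- `X_r(λ) = (p^{λ'_1+⋯+λ'_r} - p^{λ'_1+⋯+λ'_{r-1}})/(p-1)`. -/
noncomputable def Xr (p : ℝ) {n : ℕ} (lam : n.Partition) (r : ℕ) : ℝ :=
  (p ^ (∑ j ∈ Finset.range r, conjPart lam (j + 1))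
    - p ^ (∑ j ∈ Finset.range (r - 1), conjPart lam (j + 1))) / (p - 1)



section Abs
variable {x : ℝ}

lemma qPoch_succ (m : ℕ) : qPoch x (m+1) = qPoch x m * (1 - x⁻¹ ^ (m+1)) :=
  Finset.prod_range_succ _ m

lemma x_pos (hx : 2 ≤ x) : (0:ℝ) < x := lt_of_lt_of_le (by norm_num) hx
lemma x_ne (hx : 2 ≤ x) : x ≠ 0 := ne_of_gt (x_pos hx)
lemma xinv_nonneg (hx : 2 ≤ x) : (0:ℝ) ≤ x⁻¹ := inv_nonneg.2 (le_of_lt (x_pos hx))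
lemma xinv_lt_one (hx : 2 ≤ x) : x⁻¹ < 1 := by
  have := x_pos hx
  rw [inv_lt_one_iff₀]; right; linarith

lemma one_sub_pow_pos (hx : 2 ≤ x) (j : ℕ) (hj : 1 ≤ j) : (0:ℝ) < 1 - x⁻¹ ^ j := by
  have : x⁻¹ ^ j < 1 := pow_lt_one₀ (xinv_nonneg hx) (xinv_lt_one hx) (by omega)
  linarith

lemma qPoch_pos (hx : 2 ≤ x) (m : ℕ) : 0 < qPoch x m := by
  apply Finset.prod_pos
  intro j _
  exact one_sub_pow_pos hx (j+1) (by omega)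

lemma qPoch_ne (hx : 2 ≤ x) (m : ℕ) : qPoch x m ≠ 0 := ne_of_gt (qPoch_pos hx m)

lemma pow_mul_inv_pow (hx : 2 ≤ x) (c : ℕ) : x⁻¹ ^ c * x ^ c = 1 := by
  rw [← mul_pow, inv_mul_cancel₀ (x_ne hx), one_pow]

/-- `rho a c = 1/qp(a-c)` if `c ≤ a`, else 0. -/
noncomputable def rho (x : ℝ) (a c : ℕ) : ℝ := if c ≤ a then (qPoch x (a - c))⁻¹ else 0

lemma rho_zero_left (c : ℕ) : rho x 0 c = if c = 0 then 1 else 0 := by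
  unfold rho
  rcases Nat.eq_zero_or_pos c with h | h
  · subst h; simp [qPoch]
  · rw [if_neg (by omega), if_neg (by omega)]

lemma rho_zero_right (a : ℕ) : rho x a 0 = (qPoch x a)⁻¹ := by simp [rho]

lemma rho_M1 (hx : 2 ≤ x) (a c : ℕ) : rho x (a+1) c = rho x a c + x⁻¹^(a+1) * x^c * rho x (a+1) c := by
  rcases le_or_gt c a with h | h
  · have h1 : c ≤ a + 1 := by omega
    have e1 : a + 1 - c = (a - c) + 1 := by omega
    have e2 : x⁻¹^(a+1) * x^c = x⁻¹^(a-c+1) := by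
      have : (a:ℕ)+1 = (a-c+1) + c := by omega
      rw [this, pow_add, mul_assoc, pow_mul_inv_pow hx, mul_one]
    rw [rho, rho, if_pos h1, if_pos h, e1, e2, qPoch_succ]
    have hA := qPoch_ne hx (a - c)
    have hB : (1 : ℝ) - x⁻¹^(a-c+1) ≠ 0 := ne_of_gt (one_sub_pow_pos hx _ (by omega))
    have key : ∀ A t : ℝ, A ≠ 0 → 1 - t ≠ 0 → (A*(1-t))⁻¹ = A⁻¹ + t*(A*(1-t))⁻¹ := by
      intro A t hA ht; field_simp; ring
    exact key _ _ hA hB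
  rcases Nat.lt_or_ge a (c - 1) with h2 | h2
  · -- c > a + 1
    have hc : ¬ (c ≤ a + 1) := by omega
    rw [rho, rho, if_neg hc, if_neg (by omega)]
    ring
  · -- c = a + 1
    have hc : c = a + 1 := by omega
    subst hc
    rw [rho, rho, if_pos (le_refl _), if_neg (by omega), Nat.sub_self]
    have h3 := pow_mul_inv_pow hx (a+1)
    simp only [qPoch, Finset.range_zero, Finset.prod_empty, inv_one]
    rw [zero_add]
    nlinarith [h3]

lemma rho_M2 (hx : 2 ≤ x) (a d : ℕ) : rho x (a+1) (d+1) = rho x (a+1) d - x⁻¹^(a+1) * x^d * rho x (a+1) d := by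
  rcases le_or_gt d a with h | h
  · have e1 : a + 1 - d = (a - d) + 1 := by omega
    have e2 : x⁻¹^(a+1) * x^d = x⁻¹^(a-d+1) := by
      have : (a:ℕ)+1 = (a-d+1) + d := by omega
      rw [this, pow_add, mul_assoc, pow_mul_inv_pow hx, mul_one]
    rw [rho, rho, if_pos (by omega), if_pos (by omega), e1, e2]
    have e3 : a + 1 - (d+1) = a - d := by omega
    rw [e3, qPoch_succ]
    have hA := qPoch_ne hx (a - d)
    have hB : (1 : ℝ) - x⁻¹^(a-d+1) ≠ 0 := ne_of_gt (one_sub_pow_pos hx _ (by omega))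
    have key : ∀ A t : ℝ, A ≠ 0 → 1 - t ≠ 0 → A⁻¹ = (A*(1-t))⁻¹ - t*(A*(1-t))⁻¹ := by
      intro A t hA ht
      rw [mul_inv]
      field_simp
    exact key _ _ hA hB
  rcases Nat.lt_or_ge (a+1) d with h2 | h2
  · rw [rho, rho, if_neg (by omega), if_neg (by omega)]; ring
  · have hd : d = a + 1 := by omega
    subst hd
    rw [rho, rho, if_neg (by omega), if_pos (le_refl _), Nat.sub_self]
    have h3 : x⁻¹^(a+1) * x^(a+1) = 1 := pow_mul_inv_pow hx _
    simp only [qPoch, Finset.range_zero, Finset.prod_empty, inv_one]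
    nlinarith [h3]

end Abs

/-- abstract F, recursion on first argument (column removal). -/
noncomputable def Fa (x : ℝ) : ℕ → ℕ → ℝ
  | 0, a => (qPoch x a)⁻¹
  | (m+1), a => ∑ c ∈ Finset.range (m+1), x⁻¹^((c+1)^2) * rho x a (c+1) * Fa x (m - c) (c+1)
  termination_by m _ => m
  decreasing_by exact Nat.lt_succ_of_le (Nat.sub_le m c)

lemma Fa_zero (x : ℝ) (a : ℕ) : Fa x 0 a = (qPoch x a)⁻¹ := by rw [Fa]

lemma Fa_succ (x : ℝ) (m a : ℕ) :
    Fa x (m+1) a = ∑ c ∈ Finset.range (m+1), x⁻¹^((c+1)^2) * rho x a (c+1) * Fa x (m - c) (c+1) := by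
  rw [Fa]

section Abs2
variable {x : ℝ}

lemma Fa_zero_right (m : ℕ) : Fa x (m+1) 0 = 0 := by
  rw [Fa_succ]
  apply Finset.sum_eq_zero
  intro c _
  rw [rho_zero_left, if_neg (by omega)]
  ring

lemma qPoch_one : qPoch x 1 = 1 - x⁻¹ := by
  simp [qPoch]

lemma inv_helper (A t X : ℝ) (hA : A ≠ 0) (ht : 1 - t ≠ 0) (hXt : X * t = 1) :
    (X - 1) * (A * (1 - t))⁻¹ = X * A⁻¹ := by
  have h2 : X - 1 = X * (1 - t) := by rw [mul_sub, mul_one, hXt]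
  rw [h2, mul_inv]
  calc X * (1-t) * (A⁻¹ * (1-t)⁻¹) = X * A⁻¹ * ((1-t) * (1-t)⁻¹) := by ring
    _ = X * A⁻¹ := by rw [mul_inv_cancel₀ ht, mul_one]

lemma inv_helper2 (A t : ℝ) (ht : 1 - t ≠ 0) : (1-t) * (A*(1-t))⁻¹ = A⁻¹ := by
  rw [mul_inv]
  calc (1-t) * (A⁻¹ * (1-t)⁻¹) = A⁻¹ * ((1-t) * (1-t)⁻¹) := by ring
    _ = A⁻¹ := by rw [mul_inv_cancel₀ ht, mul_one]

lemma Cx0 (hx : 2 ≤ x) (c : ℕ) :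
    (x^(c+1) - 1) * Fa x 0 (c+1) = x^(c+1) * Fa x 0 c := by
  rw [Fa_zero, Fa_zero, qPoch_succ]
  have hB : (1 : ℝ) - x⁻¹^(c+1) ≠ 0 := ne_of_gt (one_sub_pow_pos hx _ (by omega))
  have hxt : x^(c+1) * x⁻¹^(c+1) = 1 := by
    rw [mul_comm]; exact pow_mul_inv_pow hx _
  exact inv_helper _ _ _ (qPoch_ne hx c) hB hxt

lemma expc1 (hx : 2 ≤ x) (c : ℕ) : x⁻¹^((c+1)^2) * x^(c+1) = x⁻¹^(c^2+c) := by
  have e : (c+1)^2 = (c^2+c) + (c+1) := by ring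
  rw [e, pow_add, mul_assoc, pow_mul_inv_pow hx, mul_one]

lemma expc2 (hx : 2 ≤ x) (c : ℕ) : x⁻¹^(c^2+c) * x^c = x⁻¹^(c^2) := by
  rw [pow_add, mul_assoc, pow_mul_inv_pow hx, mul_one]

lemma CxS (hx : 2 ≤ x) : ∀ m a, (x^(a+1) - 1) * Fa x (m+1) (a+1)
    = x^(a+1) * Fa x (m+1) a + (1 - x⁻¹^(a+1)) * Fa x m (a+1) := by
  intro m
  induction m using Nat.strong_induction_on with
  | _ m IH =>
  -- Key lemma K
  have K : ∀ a, ∑ c ∈ Finset.range (m+1),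
        x⁻¹^((c+1)^2) * x^(c+1) * rho x (a+1) (c+1) * Fa x (m-c) (c+1)
      = Fa x (m+1) (a+1) + (1 - x⁻¹^(a+1)) * Fa x m (a+1) := by
    intro a
    match m, IH with
    | 0, _ =>
      rw [Finset.sum_range_one, Fa_succ, Finset.sum_range_one]
      simp only [Nat.sub_zero]
      rw [Fa_zero, Fa_zero, qPoch_one]
      have h1 : rho x (a+1) 1 = (qPoch x a)⁻¹ := by
        rw [rho, if_pos (by omega), Nat.add_sub_cancel]
      have h2 : (1 - x⁻¹^(a+1)) * (qPoch x (a+1))⁻¹ = (qPoch x a)⁻¹ := by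
        rw [qPoch_succ]
        exact inv_helper2 _ _ (ne_of_gt (one_sub_pow_pos hx _ (by omega)))
      rw [h1, h2]
      have hq1 : (1:ℝ) - x⁻¹ ≠ 0 := by
        have := one_sub_pow_pos hx 1 le_rfl
        simp only [pow_one] at this
        exact ne_of_gt this
      have hxx : x⁻¹ * x = 1 := by
        have := pow_mul_inv_pow hx 1; simpa using this
      have hu : (1 - x⁻¹) * (1 - x⁻¹)⁻¹ = 1 := mul_inv_cancel₀ hq1
      linear_combination ((qPoch x a)⁻¹ * (1 - x⁻¹)⁻¹) * hxx + (qPoch x a)⁻¹ * hu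
    | (k+1), IH =>
      have step : ∀ c ∈ Finset.range (k+2),
          x⁻¹^((c+1)^2) * x^(c+1) * rho x (a+1) (c+1) * Fa x (k+1-c) (c+1)
          = x⁻¹^((c+1)^2) * rho x (a+1) (c+1) * Fa x (k+1-c) (c+1)
            + x⁻¹^((c+1)^2) * x^(c+1) * rho x (a+1) (c+1) * Fa x (k+1-c) c
            + x⁻¹^((c+1)^2) * (1 - x⁻¹^(c+1)) * rho x (a+1) (c+1) *
                (if c ≤ k then Fa x (k-c) (c+1) else 0) := by
        intro c hc
        rcases le_or_gt c k with h | h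
        · rw [if_pos h]
          have e : k+1-c = (k-c)+1 := by omega
          rw [e]
          have hC := IH (k-c) (by omega) c
          linear_combination (x⁻¹^((c+1)^2) * rho x (a+1) (c+1)) * hC
        · have hck : c = k+1 := by simp at hc; omega
          subst hck
          rw [if_neg (by omega), Nat.sub_self]
          have hC := Cx0 hx (k+1)
          linear_combination (x⁻¹^((k+2)^2) * rho x (a+1) (k+2)) * hC
      rw [Finset.sum_congr rfl step]
      rw [Finset.sum_add_distrib, Finset.sum_add_distrib]
      -- Sum T1
      have hT1 : ∑ c ∈ Finset.range (k+2),
          x⁻¹^((c+1)^2) * rho x (a+1) (c+1) * Fa x (k+1-c) (c+1) = Fa x (k+2) (a+1) := by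
        rw [Fa_succ]
      -- Sum T3
      have hT3 : ∑ c ∈ Finset.range (k+2),
          x⁻¹^((c+1)^2) * (1 - x⁻¹^(c+1)) * rho x (a+1) (c+1) *
            (if c ≤ k then Fa x (k-c) (c+1) else 0)
          = Fa x (k+1) (a+1)
            - ∑ c ∈ Finset.range (k+1),
                x⁻¹^((c+1)^2) * x⁻¹^(c+1) * rho x (a+1) (c+1) * Fa x (k-c) (c+1) := by
        rw [Finset.sum_range_succ, if_neg (by omega)]
        have e : ∀ c ∈ Finset.range (k+1),
            x⁻¹^((c+1)^2) * (1 - x⁻¹^(c+1)) * rho x (a+1) (c+1) *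
              (if c ≤ k then Fa x (k-c) (c+1) else 0)
            = x⁻¹^((c+1)^2) * rho x (a+1) (c+1) * Fa x (k-c) (c+1)
              - x⁻¹^((c+1)^2) * x⁻¹^(c+1) * rho x (a+1) (c+1) * Fa x (k-c) (c+1) := by
          intro c hc
          simp only [Finset.mem_range] at hc
          rw [if_pos (by omega)]
          ring
        rw [Finset.sum_congr rfl e, Finset.sum_sub_distrib, Fa_succ]
        ring
      -- Sum T2
      have hT2 : ∑ c ∈ Finset.range (k+2),
          x⁻¹^((c+1)^2) * x^(c+1) * rho x (a+1) (c+1) * Fa x (k+1-c) c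
          = (∑ c ∈ Finset.range (k+1),
              x⁻¹^((c+1)^2) * x⁻¹^(c+1) * rho x (a+1) (c+1) * Fa x (k-c) (c+1))
            - x⁻¹^(a+1) * Fa x (k+1) (a+1) := by
        have e : ∀ c ∈ Finset.range (k+2),
            x⁻¹^((c+1)^2) * x^(c+1) * rho x (a+1) (c+1) * Fa x (k+1-c) c
            = x⁻¹^(c^2+c) * rho x (a+1) c * Fa x (k+1-c) c
              - x⁻¹^(a+1) * (x⁻¹^(c^2) * rho x (a+1) c * Fa x (k+1-c) c) := by
          intro c _
          rw [← expc1 hx c]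
          have hM := rho_M2 hx a c
          have e2 : x⁻¹^((c+1)^2) * x^(c+1) * (x⁻¹^(a+1) * x^c * rho x (a+1) c)
              = x⁻¹^(a+1) * (x⁻¹^(c^2) * rho x (a+1) c) := by
            rw [expc1 hx c]
            have h5 := expc2 hx c
            linear_combination (x⁻¹^(a+1) * rho x (a+1) c) * h5
          calc x⁻¹^((c+1)^2) * x^(c+1) * rho x (a+1) (c+1) * Fa x (k+1-c) c
              = (x⁻¹^((c+1)^2) * x^(c+1) * rho x (a+1) c
                 - x⁻¹^((c+1)^2) * x^(c+1) * (x⁻¹^(a+1) * x^c * rho x (a+1) c)) * Fa x (k+1-c) c := by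
                rw [hM]; ring
            _ = _ := by rw [e2, expc1 hx c]; ring
        rw [Finset.sum_congr rfl e, Finset.sum_sub_distrib]
        congr 1
        · -- peel c = 0
          rw [Finset.sum_range_succ']
          have h0 : x⁻¹^(0^2+0) * rho x (a+1) 0 * Fa x (k+1-0) 0 = 0 := by
            simp only [Nat.sub_zero]
            rw [Fa_zero_right]
            ring
          rw [h0, add_zero]
          apply Finset.sum_congr rfl
          intro c _
          have e3 : (c+1)^2 + (c+1) = ((c+1)^2) + (c+1) := rfl
          have e4 : k+1-(c+1) = k-c := by omega
          rw [e4, pow_add]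
        · -- peel c = 0, gives Fa (k+1) (a+1)
          rw [← Finset.mul_sum, Finset.sum_range_succ']
          have h0 : x⁻¹^(0^2) * rho x (a+1) 0 * Fa x (k+1-0) 0 = 0 := by
            simp only [Nat.sub_zero]
            rw [Fa_zero_right]
            ring
          rw [h0, add_zero]
          congr 1
          rw [Fa_succ]
          apply Finset.sum_congr rfl
          intro c _
          have e4 : k+1-(c+1) = k-c := by omega
          rw [e4]
      rw [hT1, hT2, hT3]
      ring
  -- derive CxS from K
  intro a
  have E1 : Fa x (m+1) (a+1) = Fa x (m+1) a
      + x⁻¹^(a+1) * (Fa x (m+1) (a+1) + (1 - x⁻¹^(a+1)) * Fa x m (a+1)) := by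
    rw [← K a]
    nth_rewrite 1 [Fa_succ]
    nth_rewrite 1 [Fa_succ]
    rw [Finset.mul_sum, ← Finset.sum_add_distrib]
    apply Finset.sum_congr rfl
    intro c _
    have hM := rho_M1 hx a (c+1)
    calc x⁻¹^((c+1)^2) * rho x (a+1) (c+1) * Fa x (m-c) (c+1)
        = x⁻¹^((c+1)^2) * (rho x a (c+1) + x⁻¹^(a+1) * x^(c+1) * rho x (a+1) (c+1)) * Fa x (m-c) (c+1) := by
          rw [← hM]
      _ = _ := by ring
  have hxt : x^(a+1) * x⁻¹^(a+1) = 1 := by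
    rw [mul_comm]; exact pow_mul_inv_pow hx _
  linear_combination (x^(a+1)) * E1 + ((Fa x (m+1) (a+1) + (1 - x⁻¹^(a+1)) * Fa x m (a+1))) * hxt

end Abs2

section Abs3
variable {x : ℝ}

lemma qPoch_zero : qPoch x 0 = 1 := by simp [qPoch]

lemma M1sum (hx : 2 ≤ x) (m a : ℕ) : Fa x (m+1) (a+1) = Fa x (m+1) a
    + x⁻¹^(a+1) * ∑ c ∈ Finset.range (m+1),
        x⁻¹^((c+1)^2) * x^(c+1) * rho x (a+1) (c+1) * Fa x (m-c) (c+1) := by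
  nth_rewrite 1 [Fa_succ]
  nth_rewrite 1 [Fa_succ]
  rw [Finset.mul_sum, ← Finset.sum_add_distrib]
  apply Finset.sum_congr rfl
  intro c _
  have hM := rho_M1 hx a (c+1)
  calc x⁻¹^((c+1)^2) * rho x (a+1) (c+1) * Fa x (m-c) (c+1)
      = x⁻¹^((c+1)^2) * (rho x a (c+1) + x⁻¹^(a+1) * x^(c+1) * rho x (a+1) (c+1)) * Fa x (m-c) (c+1) := by
        rw [← hM]
    _ = _ := by ring

lemma Ksum (hx : 2 ≤ x) (m a : ℕ) :
    ∑ c ∈ Finset.range (m+1), x⁻¹^((c+1)^2) * x^(c+1) * rho x (a+1) (c+1) * Fa x (m-c) (c+1)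
    = Fa x (m+1) (a+1) + (1 - x⁻¹^(a+1)) * Fa x m (a+1) := by
  have h1 := M1sum hx m a
  have h2 := CxS hx m a
  have hxt : x^(a+1) * x⁻¹^(a+1) = 1 := by rw [mul_comm]; exact pow_mul_inv_pow hx _
  set S := ∑ c ∈ Finset.range (m+1),
      x⁻¹^((c+1)^2) * x^(c+1) * rho x (a+1) (c+1) * Fa x (m-c) (c+1) with hS
  linear_combination (-(x^(a+1))) * h1 + h2 + (-S) * hxt

/-- `E1a x m a = Σ_{c=1}^{m} q^{c²}(x^c-1)ρ(a,c)F(m-c,c)`. -/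
noncomputable def E1a (x : ℝ) (m a : ℕ) : ℝ :=
  ∑ c ∈ Finset.range m, x⁻¹^((c+1)^2) * (x^(c+1) - 1) * rho x a (c+1) * Fa x (m-1-c) (c+1)

lemma E1a_eq (hx : 2 ≤ x) (m a : ℕ) : E1a x (m+1) a = (1 - x⁻¹^a) * Fa x m a := by
  rcases a with _ | a
  · rw [E1a]
    rw [Finset.sum_eq_zero, pow_zero]
    · ring
    intro c _
    rw [rho_zero_left, if_neg (by omega)]
    ring
  · have h1 := Ksum hx m a
    rw [E1a]
    have e : ∀ c ∈ Finset.range (m+1),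
        x⁻¹^((c+1)^2) * (x^(c+1) - 1) * rho x (a+1) (c+1) * Fa x (m+1-1-c) (c+1)
        = x⁻¹^((c+1)^2) * x^(c+1) * rho x (a+1) (c+1) * Fa x (m-c) (c+1)
          - x⁻¹^((c+1)^2) * rho x (a+1) (c+1) * Fa x (m-c) (c+1) := by
      intro c _
      have : m + 1 - 1 - c = m - c := by omega
      rw [this]; ring
    rw [Finset.sum_congr rfl e, Finset.sum_sub_distrib, h1, ← Fa_succ]
    ring

/-- `Ef x s` is the abstract version of `E_{s+1}`. -/
noncomputable def Ef (x : ℝ) : ℕ → ℕ → ℕ → ℝ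
  | 0, m, a => E1a x m a
  | (s+1), m, a => ∑ c ∈ Finset.range m,
      x⁻¹^((c+1)^2) * x^(c+1) * rho x a (c+1) * Ef x s (m-1-c) (c+1)

lemma Ef_zero_m (s a : ℕ) : Ef x s 0 a = 0 := by
  cases s <;> simp [Ef, E1a]

lemma Ef_shift (hx : 2 ≤ x) (s : ℕ) : ∀ m a, Ef x (s+1) (m+1) a = Ef x s m a := by
  induction s with
  | zero =>
    intro m a
    show (∑ c ∈ Finset.range (m+1), _) = E1a x m a
    rw [Finset.sum_range_succ]
    have e0 : m + 1 - 1 - m = 0 := by omega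
    rw [e0, Ef_zero_m, mul_zero, add_zero, E1a]
    apply Finset.sum_congr rfl
    intro c hc
    simp only [Finset.mem_range] at hc
    have e1 : m + 1 - 1 - c = (m - 1 - c) + 1 := by omega
    rw [e1]
    show x⁻¹^((c+1)^2) * x^(c+1) * rho x a (c+1) * E1a x ((m-1-c)+1) (c+1) = _
    rw [E1a_eq hx]
    have hxt : x^(c+1) * x⁻¹^(c+1) = 1 := by rw [mul_comm]; exact pow_mul_inv_pow hx _
    linear_combination (-(x⁻¹^((c+1)^2) * rho x a (c+1) * Fa x (m-1-c) (c+1))) * hxt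
  | succ s IH =>
    intro m a
    show (∑ c ∈ Finset.range (m+1), _) = ∑ c ∈ Finset.range m, _
    rw [Finset.sum_range_succ]
    have e0 : m + 1 - 1 - m = 0 := by omega
    rw [e0, Ef_zero_m, mul_zero, add_zero]
    apply Finset.sum_congr rfl
    intro c hc
    simp only [Finset.mem_range] at hc
    have e1 : m + 1 - 1 - c = (m - 1 - c) + 1 := by omega
    rw [e1, IH]

end Abs3

section Abs4
variable {x : ℝ}

lemma Ef_eq (hx : 2 ≤ x) (s : ℕ) : ∀ m a, Ef x s (m+s+1) a = (1 - x⁻¹^a) * Fa x m a := by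
  induction s with
  | zero => intro m a; exact E1a_eq hx m a
  | succ s IH =>
    intro m a
    have e : m + (s+1) + 1 = (m + s + 1) + 1 := by omega
    rw [e, Ef_shift hx, IH]

lemma Ef_small (hx : 2 ≤ x) (s : ℕ) : ∀ m a, m ≤ s → Ef x s m a = 0 := by
  induction s with
  | zero => intro m a h; have : m = 0 := by omega
            subst this; exact Ef_zero_m 0 a
  | succ s IH =>
    intro m a h
    rcases m with _ | m
    · exact Ef_zero_m _ _
    · rw [Ef_shift hx, IH m a (by omega)]

lemma L1sum (hx : 2 ≤ x) (m : ℕ) :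
    ∑ c ∈ Finset.range (m+1), x⁻¹^((c+1)^2) * (x^(c+1) - 1) * Fa x (m-c) (c+1)
    = if m = 0 then 1 else ∑ c ∈ Finset.range m, x⁻¹^((c+1)^2) * Fa x (m-1-c) (c+1) := by
  rcases m with _ | k
  · rw [if_pos rfl, Finset.sum_range_one]
    simp only [Nat.sub_zero, pow_one]
    rw [Fa_zero, qPoch_one]
    have hq1 : (1:ℝ) - x⁻¹ ≠ 0 := by
      have := one_sub_pow_pos hx 1 le_rfl
      simp only [pow_one] at this
      exact ne_of_gt this
    have hxx : x⁻¹ * x = 1 := by have := pow_mul_inv_pow hx 1; simpa using this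
    have hu : (1 - x⁻¹) * (1 - x⁻¹)⁻¹ = 1 := mul_inv_cancel₀ hq1
    have e1 : (1:ℕ)^2 = 1 := by norm_num
    rw [e1, pow_one]
    linear_combination (1 - x⁻¹)⁻¹ * hxx + hu
  · rw [if_neg (by omega)]
    set m := k + 1 with hm
    have step : ∀ c ∈ Finset.range (m+1),
        x⁻¹^((c+1)^2) * (x^(c+1) - 1) * Fa x (m-c) (c+1)
        = x⁻¹^((c+1)^2) * x^(c+1) * Fa x (m-c) c
          + x⁻¹^((c+1)^2) * (1 - x⁻¹^(c+1)) * (if c ≤ m - 1 then Fa x (m-1-c) (c+1) else 0) := by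
      intro c hc
      rcases Nat.lt_or_ge c m with h | h
      · rw [if_pos (by omega)]
        have e : m - c = (m-1-c)+1 := by omega
        rw [e]
        have hC := CxS hx (m-1-c) c
        linear_combination (x⁻¹^((c+1)^2)) * hC
      · have hcm : c = m := by simp at hc; omega
        rw [hcm, if_neg (by omega), Nat.sub_self, mul_zero, add_zero]
        have hC := Cx0 hx m
        linear_combination (x⁻¹^((m+1)^2)) * hC
    rw [Finset.sum_congr rfl step, Finset.sum_add_distrib]
    -- first sum: peel c=0
    have hS1 : ∑ c ∈ Finset.range (m+1), x⁻¹^((c+1)^2) * x^(c+1) * Fa x (m-c) c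
        = ∑ c ∈ Finset.range m, x⁻¹^((c+1)^2) * x⁻¹^(c+1) * Fa x (m-1-c) (c+1) := by
      rw [Finset.sum_range_succ']
      have h0 : x⁻¹^((0+1)^2) * x^(0+1) * Fa x (m-0) 0 = 0 := by
        rw [Nat.sub_zero, hm, Fa_zero_right]; ring
      rw [h0, add_zero]
      apply Finset.sum_congr rfl
      intro c _
      have e4 : m - (c+1) = m-1-c := by omega
      rw [e4]
      have e5 : x⁻¹^((c+1+1)^2) * x^(c+1+1) = x⁻¹^((c+1)^2) * x⁻¹^(c+1) := by
        have e6 : (c+1+1)^2 = ((c+1)^2 + (c+1)) + (c+1+1) := by ring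
        rw [e6, pow_add, mul_assoc, pow_mul_inv_pow hx, mul_one, pow_add]
      rw [e5]
    -- second sum: drop last
    have hS2 : ∑ c ∈ Finset.range (m+1),
        x⁻¹^((c+1)^2) * (1 - x⁻¹^(c+1)) * (if c ≤ m - 1 then Fa x (m-1-c) (c+1) else 0)
        = ∑ c ∈ Finset.range m, (x⁻¹^((c+1)^2) * Fa x (m-1-c) (c+1)
            - x⁻¹^((c+1)^2) * x⁻¹^(c+1) * Fa x (m-1-c) (c+1)) := by
      rw [Finset.sum_range_succ, if_neg (by omega), mul_zero, add_zero]
      apply Finset.sum_congr rfl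
      intro c hc
      simp only [Finset.mem_range] at hc
      rw [if_pos (by omega)]
      ring
    rw [hS1, hS2, Finset.sum_sub_distrib]
    ring

lemma sum_geo_qp (hx : 2 ≤ x) : ∀ n, ∑ k ∈ Finset.range (n+1), x⁻¹^k * (qPoch x k)⁻¹ = (qPoch x n)⁻¹ := by
  intro n
  induction n with
  | zero => simp [qPoch_zero]
  | succ n IH =>
    rw [Finset.sum_range_succ, IH]
    have h2 : (qPoch x n)⁻¹ = (1 - x⁻¹^(n+1)) * (qPoch x (n+1))⁻¹ := by
      rw [qPoch_succ]
      exact (inv_helper2 _ _ (ne_of_gt (one_sub_pow_pos hx _ (by omega)))).symm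
    rw [h2]
    ring

lemma qPoch_ratio (m : ℕ) : ∀ n, m ≤ n → qPoch x n = qPoch x m * ∏ j ∈ Finset.Icc (m+1) n, (1 - x⁻¹^j) := by
  intro n
  induction n with
  | zero => intro h; have : m = 0 := by omega
            subst this; simp [qPoch_zero]
  | succ n IH =>
    intro h
    rcases Nat.lt_or_ge m (n+1) with h2 | h2
    · have hmn : m ≤ n := by omega
      rw [qPoch_succ, IH hmn, Finset.prod_Icc_succ_top (by omega), mul_assoc]
    · have : m = n+1 := by omega
      subst this
      simp
end Abs4
section PartD

/-- number of parts -/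
def ell {n : ℕ} (mu : n.Partition) : ℕ := Multiset.card mu.parts

noncomputable def wgt (x : ℝ) {n : ℕ} (mu : n.Partition) : ℝ := (partitionWeight x mu)⁻¹

def Astat {n : ℕ} (mu : n.Partition) (r : ℕ) : ℕ := ∑ j ∈ Finset.range r, conjPart mu (j + 1)

variable {n : ℕ}

lemma parts_le (lam : n.Partition) {a : ℕ} (ha : a ∈ lam.parts) : a ≤ n := by
  calc a ≤ lam.parts.sum := Multiset.single_le_sum (fun b _ => Nat.zero_le b) a ha
    _ = n := lam.parts_sum

lemma card_le_sum (s : Multiset ℕ) (h : ∀ a ∈ s, 1 ≤ a) : Multiset.card s ≤ s.sum := by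
  calc Multiset.card s = (s.map (fun _ => 1)).sum := by simp
    _ ≤ (s.map id).sum := Multiset.sum_map_le_sum_map _ _ h
    _ = s.sum := by simp

lemma ell_le (lam : n.Partition) : ell lam ≤ n := by
  have := card_le_sum lam.parts (fun a ha => lam.parts_pos ha)
  rw [lam.parts_sum] at this
  exact this

lemma ell_pos (hn : 1 ≤ n) (lam : n.Partition) : 1 ≤ ell lam := by
  by_contra h
  unfold ell at h
  have h0 : lam.parts = 0 := by
    rw [← Multiset.card_eq_zero]; omega
  have := lam.parts_sum
  rw [h0] at this
  simp at this
  omega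

lemma conjPart_eq_zero (mu : n.Partition) {j : ℕ} (hj : n < j) : conjPart mu j = 0 := by
  unfold conjPart
  rw [Multiset.card_eq_zero, Multiset.filter_eq_nil]
  intro a ha
  have := parts_le mu ha
  omega

lemma count_eq_zero_of_gt (mu : n.Partition) {j : ℕ} (hj : n < j) : mu.parts.count j = 0 := by
  rw [Multiset.count_eq_zero]
  intro hmem
  have := parts_le mu hmem
  omega

lemma conjPart_one (lam : n.Partition) : conjPart lam 1 = ell lam := by
  unfold conjPart ell
  congr 1
  rw [Multiset.filter_eq_self]
  exact fun a ha => lam.parts_pos ha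

lemma Astat_zero (lam : n.Partition) : Astat lam 0 = 0 := by simp [Astat]

lemma Astat_top (lam : n.Partition) : Astat lam n = n := by
  unfold Astat conjPart
  have key : ∀ s : Multiset ℕ, (∀ a ∈ s, a ≤ n) →
      ∑ j ∈ Finset.range n, Multiset.card (s.filter (fun a => j + 1 ≤ a)) = s.sum := by
    intro s
    induction s using Multiset.induction_on with
    | empty => simp
    | cons a s IH =>
      intro h
      have ha : a ≤ n := h a (Multiset.mem_cons_self a s)
      have step : ∀ j ∈ Finset.range n,
          Multiset.card ((a ::ₘ s).filter (fun b => j + 1 ≤ b))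
          = (if j + 1 ≤ a then 1 else 0) + Multiset.card (s.filter (fun b => j + 1 ≤ b)) := by
        intro j _
        rw [Multiset.filter_cons]
        rw [Multiset.card_add]
        congr 1
        split_ifs <;> simp
      rw [Finset.sum_congr rfl step, Finset.sum_add_distrib,
        IH (fun b hb => h b (Multiset.mem_cons_of_mem hb)), Multiset.sum_cons]
      congr 1
      have e1 : ∑ j ∈ Finset.range n, (if j + 1 ≤ a then (1:ℕ) else 0)
          = ∑ j ∈ (Finset.range n).filter (fun j => j + 1 ≤ a), 1 := (Finset.sum_filter _ _).symm
      have e2 : (Finset.range n).filter (fun j => j + 1 ≤ a) = Finset.range a := by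
        ext j
        simp only [Finset.mem_filter, Finset.mem_range]
        omega
      rw [e1, e2]
      simp
  have := key lam.parts (fun a ha => parts_le lam ha)
  rw [lam.parts_sum] at this
  exact this

/-- sum of parts-minus-one -/
lemma sum_map_sub_one (s : Multiset ℕ) (h : ∀ a ∈ s, 1 ≤ a) :
    (s.map (· - 1)).sum = s.sum - Multiset.card s := by
  induction s using Multiset.induction_on with
  | empty => simp
  | cons a s IH =>
    simp only [Multiset.map_cons, Multiset.sum_cons, Multiset.card_cons]
    rw [IH (fun b hb => h b (Multiset.mem_cons_of_mem hb))]
    have h1 : 1 ≤ a := h a (Multiset.mem_cons_self a s)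
    have h2 := card_le_sum s (fun b hb => h b (Multiset.mem_cons_of_mem hb))
    omega

lemma sum_map_add_one (s : Multiset ℕ) : (s.map (· + 1)).sum = s.sum + Multiset.card s := by
  induction s using Multiset.induction_on with
  | empty => simp
  | cons a s IH => simp [IH]; ring

/-- the not-≥2 parts are all 1 -/
lemma filter_not_two (lam : n.Partition) :
    lam.parts.filter (fun a => ¬ 2 ≤ a) = Multiset.replicate (lam.parts.count 1) 1 := by
  have h1 : lam.parts.filter (fun a => ¬ 2 ≤ a) = lam.parts.filter (fun a => a = 1) := by
    apply Multiset.filter_congr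
    intro a ha
    have := lam.parts_pos ha
    constructor <;> intro h <;> omega
  rw [h1, Multiset.eq_replicate]
  constructor
  · rw [Multiset.count_eq_card_filter_eq]
    congr 1
    apply Multiset.filter_congr
    intro a _
    exact ⟨fun h => h.symm, fun h => h.symm⟩
  · intro b hb
    exact (Multiset.mem_filter.1 hb).2
end PartD

section Glue
variable {n : ℕ}

def glue (c : ℕ) (hc : c ≤ n) (mu : (n - c).Partition) (h : ell mu ≤ c) : n.Partition where
  parts := Multiset.map (· + 1) mu.parts + Multiset.replicate (c - ell mu) 1
  parts_pos := by
    intro a ha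
    rcases Multiset.mem_add.1 ha with h1 | h1
    · obtain ⟨b, _, rfl⟩ := Multiset.mem_map.1 h1
      omega
    · rw [Multiset.eq_of_mem_replicate h1]; norm_num
  parts_sum := by
    rw [Multiset.sum_add, sum_map_add_one, Multiset.sum_replicate, mu.parts_sum, smul_eq_mul,
      mul_one]
    unfold ell at h ⊢
    omega

def shrinkTo (lam : n.Partition) (c : ℕ) (hl : ell lam = c) : (n - c).Partition where
  parts := (lam.parts.filter (fun a => 2 ≤ a)).map (· - 1)
  parts_pos := by
    intro a ha
    obtain ⟨b, hb, rfl⟩ := Multiset.mem_map.1 ha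
    have := (Multiset.mem_filter.1 hb).2
    omega
  parts_sum := by
    rw [sum_map_sub_one _ (fun a ha => by have := (Multiset.mem_filter.1 ha).2; omega)]
    have hsplit := Multiset.filter_add_not (fun a => 2 ≤ a) lam.parts
    have h1 : (lam.parts.filter (fun a => 2 ≤ a)).sum
        + (lam.parts.filter (fun a => ¬ 2 ≤ a)).sum = n := by
      rw [← Multiset.sum_add, hsplit, lam.parts_sum]
    have h2 : Multiset.card (lam.parts.filter (fun a => 2 ≤ a))
        + Multiset.card (lam.parts.filter (fun a => ¬ 2 ≤ a)) = c := by
      rw [← Multiset.card_add, hsplit, hl.symm.trans rfl]; rfl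
    have h3 : (lam.parts.filter (fun a => ¬ 2 ≤ a)).sum
        = Multiset.card (lam.parts.filter (fun a => ¬ 2 ≤ a)) := by
      rw [filter_not_two]
      simp [Multiset.sum_replicate]
    have h4 := card_le_sum (lam.parts.filter (fun a => 2 ≤ a))
      (fun a ha => by have := (Multiset.mem_filter.1 ha).2; omega)
    omega

lemma ell_glue (c : ℕ) (hc : c ≤ n) (mu : (n - c).Partition) (h : ell mu ≤ c) :
    ell (glue c hc mu h) = c := by
  show Multiset.card (Multiset.map (· + 1) mu.parts + Multiset.replicate (c - ell mu) 1) = c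
  rw [Multiset.card_add, Multiset.card_map, Multiset.card_replicate]
  unfold ell at h ⊢
  omega

lemma conjPart_glue_succ (c : ℕ) (hc : c ≤ n) (mu : (n - c).Partition) (h : ell mu ≤ c) (j : ℕ) :
    conjPart (glue c hc mu h) (j + 2) = conjPart mu (j + 1) := by
  show Multiset.card (Multiset.filter _ (_ + _)) = _
  rw [Multiset.filter_add, Multiset.filter_map]
  have h1 : (Multiset.replicate (c - ell mu) 1).filter (fun a => j + 2 ≤ a) = 0 := by
    rw [Multiset.filter_eq_nil]
    intro a ha
    rw [Multiset.eq_of_mem_replicate ha]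
    omega
  rw [h1, add_zero, Multiset.card_map]
  show Multiset.card (Multiset.filter (fun a => j + 2 ≤ a + 1) mu.parts) = _
  congr 1
  apply Multiset.filter_congr
  intro a _
  omega

lemma count_one_glue (c : ℕ) (hc : c ≤ n) (mu : (n - c).Partition) (h : ell mu ≤ c) :
    (glue c hc mu h).parts.count 1 = c - ell mu := by
  show Multiset.count 1 (_ + _) = _
  rw [Multiset.count_add, Multiset.count_replicate, if_pos rfl]
  have h1 : Multiset.count 1 (Multiset.map (· + 1) mu.parts) = 0 := by
    rw [Multiset.count_eq_zero]
    intro hmem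
    obtain ⟨b, hb, hb1⟩ := Multiset.mem_map.1 hmem
    have := mu.parts_pos hb
    omega
  rw [h1, zero_add]

lemma count_succ_glue (c : ℕ) (hc : c ≤ n) (mu : (n - c).Partition) (h : ell mu ≤ c) (i : ℕ) :
    (glue c hc mu h).parts.count (i + 2) = mu.parts.count (i + 1) := by
  show Multiset.count (i+2) (_ + _) = _
  rw [Multiset.count_add, Multiset.count_replicate, if_neg (by omega), add_zero]
  have := Multiset.count_map_eq_count' (· + 1) mu.parts (add_left_injective 1) (i + 1)
  simpa using this

lemma Astat_glue (c : ℕ) (hc : c ≤ n) (mu : (n - c).Partition) (h : ell mu ≤ c) (r : ℕ) :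
    Astat (glue c hc mu h) (r + 1) = c + Astat mu r := by
  unfold Astat
  rw [Finset.sum_range_succ']
  have h0 : conjPart (glue c hc mu h) (0 + 1) = c := by
    rw [zero_add, conjPart_one, ell_glue]
  rw [h0, add_comm]
  congr 1
  apply Finset.sum_congr rfl
  intro j _
  exact conjPart_glue_succ c hc mu h j

end Glue

section Glue2
variable {n : ℕ}

lemma ell_shrinkTo (lam : n.Partition) (c : ℕ) (hl : ell lam = c) :
    ell (shrinkTo lam c hl) ≤ c := by
  show Multiset.card _ ≤ c
  rw [show (shrinkTo lam c hl).parts = (lam.parts.filter (fun a => 2 ≤ a)).map (· - 1) from rfl,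
    Multiset.card_map]
  calc Multiset.card (lam.parts.filter (fun a => 2 ≤ a)) ≤ Multiset.card lam.parts :=
        Multiset.card_le_card (Multiset.filter_le _ _)
    _ = c := hl

lemma glue_shrinkTo (lam : n.Partition) (c : ℕ) (hl : ell lam = c) (hc : c ≤ n) :
    glue c hc (shrinkTo lam c hl) (ell_shrinkTo lam c hl) = lam := by
  apply Nat.Partition.ext
  show Multiset.map (· + 1) ((lam.parts.filter (fun a => 2 ≤ a)).map (· - 1))
      + Multiset.replicate (c - ell (shrinkTo lam c hl)) 1 = lam.parts
  rw [Multiset.map_map]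
  have h1 : Multiset.map ((· + 1) ∘ (· - 1)) (lam.parts.filter (fun a => 2 ≤ a))
      = lam.parts.filter (fun a => 2 ≤ a) := by
    have : ∀ a ∈ lam.parts.filter (fun a => 2 ≤ a), ((· + 1) ∘ (· - 1)) a = id a := by
      intro a ha
      have := (Multiset.mem_filter.1 ha).2
      show a - 1 + 1 = a
      omega
    rw [Multiset.map_congr rfl this, Multiset.map_id]
  rw [h1]
  have h2 : c - ell (shrinkTo lam c hl) = lam.parts.count 1 := by
    have e1 : ell (shrinkTo lam c hl) = Multiset.card (lam.parts.filter (fun a => 2 ≤ a)) := by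
      show Multiset.card (Multiset.map _ _) = _
      rw [Multiset.card_map]
    have hsplit := Multiset.filter_add_not (fun a => 2 ≤ a) lam.parts
    have h3 : Multiset.card (lam.parts.filter (fun a => 2 ≤ a))
        + Multiset.card (lam.parts.filter (fun a => ¬ 2 ≤ a)) = c := by
      rw [← Multiset.card_add, hsplit]; exact hl
    have h4 : Multiset.card (lam.parts.filter (fun a => ¬ 2 ≤ a)) = lam.parts.count 1 := by
      rw [filter_not_two, Multiset.card_replicate]
    omega
  rw [h2, ← filter_not_two]
  exact Multiset.filter_add_not _ _

lemma shrinkTo_glue (c : ℕ) (hc : c ≤ n) (mu : (n - c).Partition) (h : ell mu ≤ c)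
    (hl : ell (glue c hc mu h) = c) :
    shrinkTo (glue c hc mu h) c hl = mu := by
  apply Nat.Partition.ext
  show ((Multiset.map (· + 1) mu.parts + Multiset.replicate (c - ell mu) 1).filter
      (fun a => 2 ≤ a)).map (· - 1) = mu.parts
  rw [Multiset.filter_add]
  have h1 : (Multiset.replicate (c - ell mu) 1).filter (fun a => 2 ≤ a) = 0 := by
    rw [Multiset.filter_eq_nil]
    intro a ha
    rw [Multiset.eq_of_mem_replicate ha]
    omega
  have h2 : (Multiset.map (· + 1) mu.parts).filter (fun a => 2 ≤ a)
      = Multiset.map (· + 1) mu.parts := by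
    rw [Multiset.filter_eq_self]
    intro a ha
    obtain ⟨b, hb, rfl⟩ := Multiset.mem_map.1 ha
    have := mu.parts_pos hb
    omega
  rw [h1, h2, add_zero, Multiset.map_map]
  have : ∀ a ∈ mu.parts, ((· - 1) ∘ (· + 1)) a = id a := by
    intro a _
    show a + 1 - 1 = a
    omega
  rw [Multiset.map_congr rfl this, Multiset.map_id]

lemma partitionWeight_glue (x : ℝ) (hx : 2 ≤ x) (c : ℕ) (hc1 : 1 ≤ c) (hc : c ≤ n)
    (mu : (n - c).Partition) (h : ell mu ≤ c) :
    partitionWeight x (glue c hc mu h)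
      = x ^ (c^2) * qPoch x (c - ell mu) * partitionWeight x mu := by
  obtain ⟨n', rfl⟩ : ∃ n', n = n' + 1 := ⟨n - 1, by omega⟩
  unfold partitionWeight
  have hsum : ∑ i ∈ Finset.range (n'+1), (conjPart (glue c hc mu h) (i+1))^2
      = c^2 + ∑ i ∈ Finset.range (n'+1-c), (conjPart mu (i+1))^2 := by
    rw [Finset.sum_range_succ']
    have h0 : (conjPart (glue c hc mu h) (0+1))^2 = c^2 := by
      rw [zero_add, conjPart_one, ell_glue]
    rw [h0, add_comm]
    congr 1
    have e1 : ∀ i ∈ Finset.range n', (conjPart (glue c hc mu h) (i+1+1))^2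
        = (conjPart mu (i+1))^2 := by
      intro i _
      rw [show i+1+1 = i+2 from rfl, conjPart_glue_succ]
    rw [Finset.sum_congr rfl e1]
    apply (Finset.sum_subset _ _).symm
    · intro i hi
      simp only [Finset.mem_range] at hi ⊢
      omega
    · intro i _ hi
      simp only [Finset.mem_range] at hi
      have : conjPart mu (i+1) = 0 := conjPart_eq_zero mu (by omega)
      rw [this]
      norm_num
  have hprod : ∏ i ∈ Finset.range (n'+1), qPoch x ((glue c hc mu h).parts.count (i+1))
      = qPoch x (c - ell mu) * ∏ i ∈ Finset.range (n'+1-c), qPoch x (mu.parts.count (i+1)) := by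
    rw [Finset.prod_range_succ']
    have h0 : qPoch x ((glue c hc mu h).parts.count (0+1)) = qPoch x (c - ell mu) := by
      rw [zero_add, count_one_glue]
    rw [h0, mul_comm]
    congr 1
    have e1 : ∀ i ∈ Finset.range n', qPoch x ((glue c hc mu h).parts.count (i+1+1))
        = qPoch x (mu.parts.count (i+1)) := by
      intro i _
      rw [show i+1+1 = i+2 from rfl, count_succ_glue]
    rw [Finset.prod_congr rfl e1]
    apply (Finset.prod_subset _ _).symm
    · intro i hi
      simp only [Finset.mem_range] at hi ⊢
      omega
    · intro i _ hi
      simp only [Finset.mem_range] at hi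
      have : mu.parts.count (i+1) = 0 := count_eq_zero_of_gt mu (by omega)
      rw [this]
      simp [qPoch]
  rw [hsum, hprod, pow_add]
  ring

end Glue2

section Bridge
variable {n : ℕ}

lemma rho_of_gt {x : ℝ} {a c : ℕ} (h : ¬ c ≤ a) : rho x a c = 0 := if_neg h

lemma wgt_glue (x : ℝ) (hx : 2 ≤ x) (c : ℕ) (hc1 : 1 ≤ c) (hc : c ≤ n)
    (mu : (n - c).Partition) (h : ell mu ≤ c) :
    wgt x (glue c hc mu h) = x⁻¹ ^ (c^2) * rho x c (ell mu) * wgt x mu := by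
  unfold wgt
  rw [partitionWeight_glue x hx c hc1 hc mu h, mul_inv, mul_inv, rho, if_pos h, ← inv_pow]

lemma fiber_sum (x : ℝ) (c : ℕ) (hc1 : 1 ≤ c) (hc : c ≤ n) (H : ∀ {k : ℕ}, k.Partition → ℝ) :
    ∑ lam ∈ Finset.univ.filter (fun lam : n.Partition => ell lam = c), H lam
    = ∑ mu : (n - c).Partition,
        (if h : ell mu ≤ c ∧ c ≤ n then H (glue c h.2 mu h.1) else 0) := by
  have hz : ∀ mu ∈ (Finset.univ : Finset ((n - c).Partition)),
      mu ∉ Finset.univ.filter (fun mu : (n - c).Partition => ell mu ≤ c) →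
      (if h : ell mu ≤ c ∧ c ≤ n then H (glue c h.2 mu h.1) else 0) = 0 := by
    intro mu _ hmu
    rw [dif_neg]
    intro hand
    exact hmu (Finset.mem_filter.2 ⟨Finset.mem_univ _, hand.1⟩)
  rw [← Finset.sum_subset (Finset.filter_subset _ _) hz]
  refine Finset.sum_bij'
    (fun lam hlam => shrinkTo lam c (Finset.mem_filter.1 hlam).2)
    (fun mu hmu => glue c hc mu (Finset.mem_filter.1 hmu).2)
    (fun lam hlam => Finset.mem_filter.2 ⟨Finset.mem_univ _, ell_shrinkTo lam c _⟩)
    (fun mu hmu => Finset.mem_filter.2 ⟨Finset.mem_univ _, ell_glue c hc mu _⟩)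
    (fun lam hlam => glue_shrinkTo lam c _ hc)
    (fun mu hmu => shrinkTo_glue c hc mu _ _)
    (fun lam hlam => ?_)
  rw [dif_pos ⟨ell_shrinkTo lam c _, hc⟩]
  congr 1
  exact (glue_shrinkTo lam c _ hc).symm

lemma decomp (x : ℝ) (hn : 1 ≤ n) (H : ∀ {k : ℕ}, k.Partition → ℝ) :
    ∑ lam : n.Partition, H lam
    = ∑ c ∈ Finset.range n, ∑ mu : (n - (c+1)).Partition,
        (if h : ell mu ≤ c + 1 ∧ c + 1 ≤ n then H (glue (c+1) h.2 mu h.1) else 0) := by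
  have hmaps : ∀ lam ∈ (Finset.univ : Finset n.Partition), ell lam ∈ Finset.Icc 1 n := by
    intro lam _
    exact Finset.mem_Icc.2 ⟨ell_pos hn lam, ell_le lam⟩
  rw [← Finset.sum_fiberwise_of_maps_to hmaps H]
  have e1 : Finset.Icc 1 n = Finset.Ico 1 (n+1) := by
    rw [Finset.Ico_add_one_right_eq_Icc]
  rw [e1, Finset.sum_Ico_eq_sum_range]
  simp only [Nat.add_sub_cancel]
  apply Finset.sum_congr rfl
  intro c hc
  simp only [Finset.mem_range] at hc
  rw [show 1 + c = c + 1 from by omega]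
  exact fiber_sum x (c+1) (by omega) (by omega) H

/-- partition-side F -/
noncomputable def PF (x : ℝ) (m a : ℕ) : ℝ := ∑ mu : m.Partition, wgt x mu * rho x a (ell mu)

lemma parts_eq_zero (mu : Nat.Partition 0) : mu.parts = 0 := by
  have hs := mu.parts_sum
  rw [Multiset.eq_zero_iff_forall_notMem]
  intro a ha
  have h1 := mu.parts_pos ha
  have h2 : a ≤ 0 := parts_le mu ha
  omega

lemma wgt_zero_partition (x : ℝ) (mu : Nat.Partition 0) : wgt x mu = 1 := by
  unfold wgt partitionWeight
  simp

lemma ell_zero_partition (mu : Nat.Partition 0) : ell mu = 0 := by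
  unfold ell
  rw [parts_eq_zero mu]
  rfl

lemma Astat_zero_partition (mu : Nat.Partition 0) (s : ℕ) : Astat mu s = 0 := by
  unfold Astat conjPart
  rw [parts_eq_zero mu]
  simp

lemma sum_partition_zero (f : Nat.Partition 0 → ℝ) :
    ∑ mu : Nat.Partition 0, f mu = f default := by
  rw [Finset.univ_unique, Finset.sum_singleton]

lemma PF_eq {x : ℝ} (hx : 2 ≤ x) : ∀ m a, PF x m a = Fa x m a := by
  intro m
  induction m using Nat.strong_induction_on with
  | _ m IH =>
  intro a
  rcases m with _ | m
  · rw [PF, sum_partition_zero, wgt_zero_partition, ell_zero_partition, rho_zero_right,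
      Fa_zero, one_mul]
  · rw [PF, decomp x (by omega) (H := fun {k} mu => wgt x mu * rho x a (ell mu)), Fa_succ]
    apply Finset.sum_congr rfl
    intro c hc
    simp only [Finset.mem_range] at hc
    have inner : ∀ mu : (m + 1 - (c+1)).Partition,
        (if h : ell mu ≤ c + 1 ∧ c + 1 ≤ m + 1 then
          wgt x (glue (c+1) h.2 mu h.1) * rho x a (ell (glue (c+1) h.2 mu h.1)) else 0)
        = x⁻¹^((c+1)^2) * rho x a (c+1) * (wgt x mu * rho x (c+1) (ell mu)) := by
      intro mu
      by_cases hmu : ell mu ≤ c + 1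
      · rw [dif_pos ⟨hmu, by omega⟩, wgt_glue x hx (c+1) (by omega) (by omega) mu hmu,
          ell_glue]
        ring
      · rw [dif_neg (by tauto), rho_of_gt hmu]
        ring
    rw [Finset.sum_congr rfl (fun mu _ => inner mu), ← Finset.mul_sum, ← PF]
    have e2 : m + 1 - (c+1) = m - c := by omega
    rw [e2, IH (m - c) (by omega) (c+1)]

end Bridge

section Final
variable {x : ℝ}

noncomputable def PW (x : ℝ) (k : ℕ) : ℝ := ∑ mu : k.Partition, wgt x mu

/-- `PPsi x s` is the partition-side `E_{s+1}`. -/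
noncomputable def PPsi (x : ℝ) (s m a : ℕ) : ℝ :=
  ∑ mu : m.Partition, wgt x mu * (x^(Astat mu (s+1)) - x^(Astat mu s)) * rho x a (ell mu)

noncomputable def PL (x : ℝ) (n r : ℕ) : ℝ :=
  ∑ lam : n.Partition, wgt x lam * (x^(Astat lam r) - x^(Astat lam (r-1)))

lemma PW_zero : PW x 0 = 1 := by
  rw [PW, sum_partition_zero, wgt_zero_partition]

lemma PW_expand (hx : 2 ≤ x) (k : ℕ) (hk : 1 ≤ k) :
    PW x k = ∑ c ∈ Finset.range k, x⁻¹^((c+1)^2) * Fa x (k-1-c) (c+1) := by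
  rw [PW, decomp x hk (H := fun {k} mu => wgt x mu)]
  apply Finset.sum_congr rfl
  intro c hc
  simp only [Finset.mem_range] at hc
  have inner : ∀ mu : (k - (c+1)).Partition,
      (if h : ell mu ≤ c + 1 ∧ c + 1 ≤ k then wgt x (glue (c+1) h.2 mu h.1) else 0)
      = x⁻¹^((c+1)^2) * (wgt x mu * rho x (c+1) (ell mu)) := by
    intro mu
    by_cases hmu : ell mu ≤ c + 1
    · rw [dif_pos ⟨hmu, by omega⟩, wgt_glue x hx (c+1) (by omega) (by omega) mu hmu]
      ring
    · rw [dif_neg (by tauto), rho_of_gt hmu]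
      ring
  rw [Finset.sum_congr rfl (fun mu _ => inner mu), ← Finset.mul_sum, ← PF,
    PF_eq hx, show k - (c+1) = k-1-c from by omega]

lemma PL_one (hx : 2 ≤ x) (m : ℕ) (hm : 1 ≤ m) :
    PL x m 1 = ∑ c ∈ Finset.range m, x⁻¹^((c+1)^2) * (x^(c+1) - 1) * Fa x (m-1-c) (c+1) := by
  rw [PL, decomp x hm (H := fun {k} mu => wgt x mu * (x^(Astat mu 1) - x^(Astat mu 0)))]
  apply Finset.sum_congr rfl
  intro c hc
  simp only [Finset.mem_range] at hc
  have inner : ∀ mu : (m - (c+1)).Partition,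
      (if h : ell mu ≤ c + 1 ∧ c + 1 ≤ m then
        wgt x (glue (c+1) h.2 mu h.1) *
          (x^(Astat (glue (c+1) h.2 mu h.1) 1) - x^(Astat (glue (c+1) h.2 mu h.1) 0)) else 0)
      = x⁻¹^((c+1)^2) * (x^(c+1) - 1) * (wgt x mu * rho x (c+1) (ell mu)) := by
    intro mu
    by_cases hmu : ell mu ≤ c + 1
    · rw [dif_pos ⟨hmu, by omega⟩, wgt_glue x hx (c+1) (by omega) (by omega) mu hmu,
        Astat_glue, Astat_zero, Astat_zero]
      norm_num
      ring
    · rw [dif_neg (by tauto), rho_of_gt hmu]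
      ring
  rw [Finset.sum_congr rfl (fun mu _ => inner mu), ← Finset.mul_sum, ← PF,
    PF_eq hx, show m - (c+1) = m-1-c from by omega]

lemma PPsi_zero_m (s a : ℕ) : PPsi x s 0 a = 0 := by
  rw [PPsi, sum_partition_zero, Astat_zero_partition, Astat_zero_partition]
  ring

lemma PPsi_eq (hx : 2 ≤ x) : ∀ s m a, PPsi x s m a = Ef x s m a := by
  intro s
  induction s with
  | zero =>
    intro m a
    rcases m with _ | m
    · rw [PPsi_zero_m, Ef_zero_m]
    · rw [PPsi, decomp x (by omega)
        (H := fun {k} mu => wgt x mu * (x^(Astat mu 1) - x^(Astat mu 0)) * rho x a (ell mu))]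
      show _ = E1a x (m+1) a
      rw [E1a]
      apply Finset.sum_congr rfl
      intro c hc
      simp only [Finset.mem_range] at hc
      have inner : ∀ mu : (m + 1 - (c+1)).Partition,
          (if h : ell mu ≤ c + 1 ∧ c + 1 ≤ m + 1 then
            wgt x (glue (c+1) h.2 mu h.1) *
              (x^(Astat (glue (c+1) h.2 mu h.1) 1) - x^(Astat (glue (c+1) h.2 mu h.1) 0)) *
              rho x a (ell (glue (c+1) h.2 mu h.1)) else 0)
          = x⁻¹^((c+1)^2) * (x^(c+1) - 1) * rho x a (c+1) * (wgt x mu * rho x (c+1) (ell mu)) := by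
        intro mu
        by_cases hmu : ell mu ≤ c + 1
        · rw [dif_pos ⟨hmu, by omega⟩, wgt_glue x hx (c+1) (by omega) (by omega) mu hmu,
            Astat_glue, Astat_zero, Astat_zero, ell_glue]
          norm_num
          ring
        · rw [dif_neg (by tauto), rho_of_gt hmu]
          ring
      rw [Finset.sum_congr rfl (fun mu _ => inner mu), ← Finset.mul_sum, ← PF,
        PF_eq hx, show m + 1 - (c+1) = m-c from by omega]
      rw [show m + 1 - 1 - c = m - c from by omega]
  | succ s IH =>
    intro m a
    rcases m with _ | m
    · rw [PPsi_zero_m, Ef_zero_m]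
    · rw [PPsi, decomp x (by omega)
        (H := fun {k} mu => wgt x mu * (x^(Astat mu (s+2)) - x^(Astat mu (s+1))) * rho x a (ell mu))]
      show _ = ∑ c ∈ Finset.range (m+1),
        x⁻¹^((c+1)^2) * x^(c+1) * rho x a (c+1) * Ef x s (m+1-1-c) (c+1)
      apply Finset.sum_congr rfl
      intro c hc
      simp only [Finset.mem_range] at hc
      have inner : ∀ mu : (m + 1 - (c+1)).Partition,
          (if h : ell mu ≤ c + 1 ∧ c + 1 ≤ m + 1 then
            wgt x (glue (c+1) h.2 mu h.1) *
              (x^(Astat (glue (c+1) h.2 mu h.1) (s+2)) - x^(Astat (glue (c+1) h.2 mu h.1) (s+1))) *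
              rho x a (ell (glue (c+1) h.2 mu h.1)) else 0)
          = x⁻¹^((c+1)^2) * x^(c+1) * rho x a (c+1) *
              (wgt x mu * (x^(Astat mu (s+1)) - x^(Astat mu s)) * rho x (c+1) (ell mu)) := by
        intro mu
        by_cases hmu : ell mu ≤ c + 1
        · rw [dif_pos ⟨hmu, by omega⟩, wgt_glue x hx (c+1) (by omega) (by omega) mu hmu,
            Astat_glue, Astat_glue, ell_glue, pow_add, pow_add]
          ring
        · rw [dif_neg (by tauto), rho_of_gt hmu]
          ring
      rw [Finset.sum_congr rfl (fun mu _ => inner mu), ← Finset.mul_sum, ← PPsi,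
        IH, show m + 1 - (c+1) = m + 1 - 1 - c from by omega]

lemma PL_r (hx : 2 ≤ x) (n r : ℕ) (hn : 1 ≤ n) :
    PL x n (r+2) = ∑ c ∈ Finset.range n, x⁻¹^((c+1)^2) * x^(c+1) * Ef x r (n-1-c) (c+1) := by
  rw [PL, show r + 2 - 1 = r + 1 from rfl, decomp x hn
    (H := fun {k} mu => wgt x mu * (x^(Astat mu (r+2)) - x^(Astat mu (r+1))))]
  apply Finset.sum_congr rfl
  intro c hc
  simp only [Finset.mem_range] at hc
  have inner : ∀ mu : (n - (c+1)).Partition,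
      (if h : ell mu ≤ c + 1 ∧ c + 1 ≤ n then
        wgt x (glue (c+1) h.2 mu h.1) *
          (x^(Astat (glue (c+1) h.2 mu h.1) (r+2)) - x^(Astat (glue (c+1) h.2 mu h.1) (r+1))) else 0)
      = x⁻¹^((c+1)^2) * x^(c+1) *
          (wgt x mu * (x^(Astat mu (r+1)) - x^(Astat mu r)) * rho x (c+1) (ell mu)) := by
    intro mu
    by_cases hmu : ell mu ≤ c + 1
    · rw [dif_pos ⟨hmu, by omega⟩, wgt_glue x hx (c+1) (by omega) (by omega) mu hmu,
        Astat_glue, Astat_glue, pow_add, pow_add]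
      ring
    · rw [dif_neg (by tauto), rho_of_gt hmu]
      ring
  rw [Finset.sum_congr rfl (fun mu _ => inner mu), ← Finset.mul_sum, ← PPsi,
    PPsi_eq hx, show n - (c+1) = n-1-c from by omega]

end Final

section Final2
variable {x : ℝ}

lemma PL_succ (hx : 2 ≤ x) (M r : ℕ) (hM : 1 ≤ M) (hr : 1 ≤ r) (hrM : r ≤ M) :
    PL x (M+1) (r+1) = PL x M r := by
  rcases r with _ | r
  · omega
  rcases r with _ | r
  · -- r = 1 : PL (M+1) 2 = PL M 1
    rw [show (1:ℕ)+1 = 0+2 from rfl, PL_r hx (M+1) 0 (by omega), PL_one hx M hM,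
      Finset.sum_range_succ]
    have hlast : x⁻¹^((M+1)^2) * x^(M+1) * Ef x 0 (M+1-1-M) (M+1) = 0 := by
      rw [show M+1-1-M = 0 from by omega, Ef_zero_m]
      ring
    rw [hlast, add_zero]
    apply Finset.sum_congr rfl
    intro c hc
    simp only [Finset.mem_range] at hc
    rw [show M+1-1-c = (M-1-c)+1 from by omega]
    show x⁻¹^((c+1)^2) * x^(c+1) * E1a x ((M-1-c)+1) (c+1) = _
    rw [E1a_eq hx]
    have hxt : x^(c+1) * x⁻¹^(c+1) = 1 := by rw [mul_comm]; exact pow_mul_inv_pow hx _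
    linear_combination (-(x⁻¹^((c+1)^2) * Fa x (M-1-c) (c+1))) * hxt
  · -- r = r+2
    rw [show r+2+1 = (r+1)+2 from rfl, PL_r hx (M+1) (r+1) (by omega),
      PL_r hx M r hM, Finset.sum_range_succ]
    have hlast : x⁻¹^((M+1)^2) * x^(M+1) * Ef x (r+1) (M+1-1-M) (M+1) = 0 := by
      rw [show M+1-1-M = 0 from by omega, Ef_zero_m]
      ring
    rw [hlast, add_zero]
    apply Finset.sum_congr rfl
    intro c hc
    simp only [Finset.mem_range] at hc
    rw [show M+1-1-c = (M-1-c)+1 from by omega, Ef_shift hx]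

lemma PL_eq_PW (hx : 2 ≤ x) : ∀ r n, 1 ≤ r → r ≤ n → PL x n r = PW x (n - r) := by
  intro r
  induction r with
  | zero => intro n h; omega
  | succ r IH =>
    intro n _ hrn
    rcases r with _ | r'
    · -- r = 1
      obtain ⟨m, rfl⟩ : ∃ m, n = m + 1 := ⟨n - 1, by omega⟩
      rw [PL_one hx (m+1) (by omega)]
      have hL := L1sum hx m
      rw [show ∑ c ∈ Finset.range (m+1), x⁻¹^((c+1)^2) * (x^(c+1) - 1) * Fa x (m+1-1-c) (c+1)
          = ∑ c ∈ Finset.range (m+1), x⁻¹^((c+1)^2) * (x^(c+1) - 1) * Fa x (m-c) (c+1) from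
        Finset.sum_congr rfl (fun c _ => by rw [show m+1-1-c = m-c from by omega]), hL]
      rcases m with _ | m'
      · rw [if_pos rfl]
        rw [show (0:ℕ)+1-1 = 0 from rfl, PW_zero]
      · rw [if_neg (by omega), show m'+1+1-1 = m'+1 from rfl, PW_expand hx (m'+1) (by omega)]
    · -- r+1 ≥ 2
      obtain ⟨M, rfl⟩ : ∃ M, n = M + 1 := ⟨n - 1, by omega⟩
      rw [PL_succ hx M (r'+1) (by omega) (by omega) (by omega),
        IH M (by omega) (by omega), show M+1-(r'+1+1) = M - (r'+1) from by omega]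

lemma PW_closed (hx : 2 ≤ x) : ∀ k, PW x k = x⁻¹^k * (qPoch x k)⁻¹ := by
  intro k
  induction k using Nat.strong_induction_on with
  | _ k IH =>
  rcases k with _ | n
  · rw [PW_zero, qPoch_zero]
    norm_num
  · have tele : (x^(n+1) - 1) * PW x (n+1) = ∑ j ∈ Finset.range (n+1), PL x (n+1) (j+1) := by
      calc (x^(n+1) - 1) * PW x (n+1)
          = ∑ lam : (n+1).Partition, wgt x lam * (x^(n+1) - 1) := by
            rw [PW, Finset.mul_sum]
            exact Finset.sum_congr rfl (fun lam _ => by ring)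
        _ = ∑ lam : (n+1).Partition, ∑ j ∈ Finset.range (n+1),
              wgt x lam * (x^(Astat lam (j+1)) - x^(Astat lam j)) := by
            apply Finset.sum_congr rfl
            intro lam _
            rw [← Finset.mul_sum, Finset.sum_range_sub (fun j => x^(Astat lam j)),
              Astat_top, Astat_zero, pow_zero]
        _ = ∑ j ∈ Finset.range (n+1), ∑ lam : (n+1).Partition,
              wgt x lam * (x^(Astat lam (j+1)) - x^(Astat lam j)) := Finset.sum_comm
        _ = ∑ j ∈ Finset.range (n+1), PL x (n+1) (j+1) := by
            apply Finset.sum_congr rfl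
            intro j _
            rw [PL, show j+1-1 = j from rfl]
    have rhs1 : ∑ j ∈ Finset.range (n+1), PL x (n+1) (j+1)
        = ∑ j ∈ Finset.range (n+1), PW x (n - j) := by
      apply Finset.sum_congr rfl
      intro j hj
      simp only [Finset.mem_range] at hj
      rw [PL_eq_PW hx (j+1) (n+1) (by omega) (by omega),
        show n+1-(j+1) = n - j from by omega]
    have rhs2 : ∑ j ∈ Finset.range (n+1), PW x (n - j)
        = ∑ j ∈ Finset.range (n+1), PW x j := by
      have hr := Finset.sum_range_reflect (fun j => PW x j) (n+1)
      calc ∑ j ∈ Finset.range (n+1), PW x (n - j)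
          = ∑ j ∈ Finset.range (n+1), PW x (n+1-1-j) := by
            exact Finset.sum_congr rfl (fun j _ => by rw [show n+1-1-j = n-j from by omega])
        _ = ∑ j ∈ Finset.range (n+1), PW x j := hr
    have rhs3 : ∑ j ∈ Finset.range (n+1), PW x j = (qPoch x n)⁻¹ := by
      rw [Finset.sum_congr rfl (fun j hj => IH j (by simp only [Finset.mem_range] at hj; omega)),
        sum_geo_qp hx n]
    have hne : x^(n+1) - 1 ≠ 0 := by
      have : (1:ℝ) < x^(n+1) := one_lt_pow₀ (by linarith) (by omega)
      linarith
    have closed : (x^(n+1) - 1) * (x⁻¹^(n+1) * (qPoch x (n+1))⁻¹) = (qPoch x n)⁻¹ := by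
      have h2 : (qPoch x n)⁻¹ = (1 - x⁻¹^(n+1)) * (qPoch x (n+1))⁻¹ := by
        rw [qPoch_succ]
        exact (inv_helper2 _ _ (ne_of_gt (one_sub_pow_pos hx _ (by omega)))).symm
      have hxt : x^(n+1) * x⁻¹^(n+1) = 1 := by rw [mul_comm]; exact pow_mul_inv_pow hx _
      linear_combination ((qPoch x (n+1))⁻¹) * hxt + (-1) * h2
    apply mul_left_cancel₀ hne
    rw [tele, rhs1, rhs2, rhs3, closed]
end Final2

theorem mean_Xr (p n r : ℕ) (hp : p.Prime) (hr : 1 ≤ r) (hrn : r ≤ n) :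
    ∑ lam : n.Partition, unipMeasure (p : ℝ) lam * Xr (p : ℝ) lam r
      = (p : ℝ) ^ r * (∏ j ∈ Finset.Icc (n - r + 1) n, (1 - (p : ℝ)⁻¹ ^ j))
          / ((p : ℝ) - 1) := by
  set x : ℝ := (p : ℝ) with hxdef
  have hx : (2:ℝ) ≤ x := by
    rw [hxdef]
    exact_mod_cast hp.two_le
  have step1 : ∀ lam : n.Partition, unipMeasure x lam * Xr x lam r
      = (x^n * qPoch x n * (x - 1)⁻¹) *
          (wgt x lam * (x^(Astat lam r) - x^(Astat lam (r-1)))) := by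
    intro lam
    rw [unipMeasure, Xr, div_eq_mul_inv, div_eq_mul_inv]
    show x^n * qPoch x n * (partitionWeight x lam)⁻¹
        * ((x^(Astat lam r) - x^(Astat lam (r-1))) * (x-1)⁻¹) = _
    rw [wgt]
    ring
  rw [Finset.sum_congr rfl (fun lam _ => step1 lam), ← Finset.mul_sum, ← PL,
    PL_eq_PW hx r n hr hrn, PW_closed hx]
  have hprod := qPoch_ratio (x := x) (n - r) n (by omega)
  have h3 : x^n * x⁻¹^(n-r) = x^r := by
    have e : x^n = x^(n-r) * x^r := by
      rw [← pow_add]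
      congr 1
      omega
    rw [e]
    have h4 := pow_mul_inv_pow hx (n - r)
    linear_combination (x^r) * h4
  have h2 : qPoch x (n - r) * (qPoch x (n-r))⁻¹ = 1 := mul_inv_cancel₀ (qPoch_ne hx _)
  rw [hprod, div_eq_mul_inv]
  linear_combination (x^n * x⁻¹^(n-r) * (∏ j ∈ Finset.Icc (n-r+1) n, (1 - x⁻¹^j)) * (x-1)⁻¹) * h2
    + ((∏ j ∈ Finset.Icc (n-r+1) n, (1 - x⁻¹^j)) * (x-1)⁻¹) * h3
end

section
/- Let E_n denote expectation for the measure on partitions of n generated by Borodin's division algorithm (grow from the empty partition by n steps, each step adding a dot to column 1 with probability p^{-λ'_1} and to column j > 1 with probability p^{-λ'_j} - p^{-λ'_{j-1}}). Then for 1 ≤ r ≤ n, E_n[(p^{λ'_1+...+λ'_r} - p^{λ'_1+...+λ'_{r-1}})/(p-1)] = (p-1)^{r-1} · C(n,r). -/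
/-- A growth history for Borodin's division algorithm is recorded by the
column numbers: `c i` means that at step `i` a dot is added to column `(c i).val + 1`.
`borodinColCount c k j` is the number of dots in column `j` after the first `k` steps;
after all `n` steps, `λ'_j = borodinColCount c n j`. -/
def borodinColCount {n : ℕ} (c : Fin n → Fin n) (k j : ℕ) : ℕ :=
  (Finset.univ.filter (fun i : Fin n => i.val < k ∧ (c i).val + 1 = j)).card

/-- The probability of the step `i` of the growth history `c`: from the current shape,
a dot is added to column 1 with probability `p^{-λ'_1}` and to column `j > 1` with
probability `p^{-λ'_j} - p^{-λ'_{j-1}}` (which vanishes unless the result is again a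
partition, so invalid histories automatically get probability 0). -/
noncomputable def borodinStepProb (p : ℝ) {n : ℕ} (c : Fin n → Fin n) (i : Fin n) : ℝ :=
  if (c i).val = 0 then p⁻¹ ^ borodinColCount c i.val 1
  else p⁻¹ ^ borodinColCount c i.val ((c i).val + 1)
    - p⁻¹ ^ borodinColCount c i.val (c i).val

/-- generalized column count, for histories of `m` steps with columns in `Fin N`. -/
def cnt {m N : ℕ} (c : Fin m → Fin N) (k j : ℕ) : ℕ :=
  (Finset.univ.filter (fun i : Fin m => i.val < k ∧ (c i).val + 1 = j)).card

noncomputable def sp (p : ℝ) {m N : ℕ} (c : Fin m → Fin N) (i : Fin m) : ℝ :=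
  if (c i).val = 0 then p⁻¹ ^ cnt c i.val 1
  else p⁻¹ ^ cnt c i.val ((c i).val + 1) - p⁻¹ ^ cnt c i.val (c i).val

lemma bcc_eq {n : ℕ} (c : Fin n → Fin n) (k j : ℕ) : borodinColCount c k j = cnt c k j := rfl

lemma bsp_eq (p : ℝ) {n : ℕ} (c : Fin n → Fin n) (i : Fin n) :
    borodinStepProb p c i = sp p c i := rfl

lemma cnt_zero {m N : ℕ} (c : Fin m → Fin N) (j : ℕ) : cnt c 0 j = 0 := by
  simp [cnt]

lemma cnt_succ {m N : ℕ} (c : Fin m → Fin N) {k : ℕ} (hk : k < m) (j : ℕ) :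
    cnt c (k+1) j = cnt c k j + (if (c ⟨k, hk⟩).val + 1 = j then 1 else 0) := by
  classical
  set a : Fin m := ⟨k, hk⟩ with ha
  have hav : a.val = k := rfl
  have h : ∀ i : Fin m, (if i.val < k+1 ∧ (c i).val + 1 = j then 1 else 0)
      = (if i.val < k ∧ (c i).val + 1 = j then 1 else 0)
        + (if i = a then (if (c a).val + 1 = j then 1 else 0) else 0) := by
    intro i
    by_cases hia : i = a
    · rw [hia, hav]
      simp [Nat.lt_irrefl, Nat.lt_succ_self]
    · have hik : i.val ≠ k := fun h => hia (Fin.ext (by rw [hav]; exact h))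
      have hiff : (i.val < k+1) ↔ i.val < k := by omega
      simp [hiff, hia]
  simp only [cnt, Finset.card_filter]
  rw [Finset.sum_congr rfl (fun i _ => h i), Finset.sum_add_distrib,
    Finset.sum_ite_eq' Finset.univ a, if_pos (Finset.mem_univ a)]

lemma cnt_snoc {m N : ℕ} (c' : Fin m → Fin N) (x : Fin N) {k : ℕ} (hk : k ≤ m) (j : ℕ) :
    cnt (Fin.snoc c' x) k j = cnt c' k j := by
  classical
  simp only [cnt, Finset.card_filter]
  rw [Fin.sum_univ_castSucc]
  simp [Fin.snoc_castSucc, Fin.snoc_last, Nat.not_lt.mpr hk]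

lemma cnt_snoc_top {m N : ℕ} (c' : Fin m → Fin N) (x : Fin N) (j : ℕ) :
    cnt (Fin.snoc c' x) (m+1) j = cnt c' m j + (if x.val + 1 = j then 1 else 0) := by
  classical
  simp only [cnt, Finset.card_filter]
  rw [Fin.sum_univ_castSucc]
  congr 1
  · refine Finset.sum_congr rfl fun i _ => ?_
    have h1 : i.val < m := i.isLt
    have h2 : i.val < m + 1 := by omega
    simp [Fin.snoc_castSucc, h1, h2]
  · simp [Fin.snoc_last]

lemma sp_snoc {p : ℝ} {m N : ℕ} (c' : Fin m → Fin N) (x : Fin N) (i : Fin m) :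
    sp p (Fin.snoc c' x) i.castSucc = sp p c' i := by
  simp only [sp, Fin.snoc_castSucc, Fin.coe_castSucc, cnt_snoc c' x (le_of_lt i.isLt)]

lemma sp_snoc_last {p : ℝ} {m N : ℕ} (c' : Fin m → Fin N) (x : Fin N) :
    sp p (Fin.snoc c' x) (Fin.last m)
      = if x.val = 0 then p⁻¹ ^ cnt c' m 1
        else p⁻¹ ^ cnt c' m (x.val + 1) - p⁻¹ ^ cnt c' m x.val := by
  simp only [sp, Fin.snoc_last, Fin.val_last, cnt_snoc c' x le_rfl]

lemma prod_sp_snoc {p : ℝ} {m N : ℕ} (c' : Fin m → Fin N) (x : Fin N) :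
    ∏ i, sp p (Fin.snoc c' x) i
      = (∏ i, sp p c' i) *
        (if x.val = 0 then p⁻¹ ^ cnt c' m 1
          else p⁻¹ ^ cnt c' m (x.val + 1) - p⁻¹ ^ cnt c' m x.val) := by
  rw [Fin.prod_univ_castSucc]
  rw [sp_snoc_last]
  congr 1
  exact Finset.prod_congr rfl fun i _ => sp_snoc c' x i

lemma sum_cnt {m N : ℕ} (c : Fin m → Fin N) :
    ∑ j ∈ Finset.range N, cnt c m (j+1) = m := by
  classical
  simp only [cnt, Finset.card_filter]
  rw [Finset.sum_comm]
  have h : ∀ i : Fin m,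
      (∑ j ∈ Finset.range N, if i.val < m ∧ (c i).val + 1 = j + 1 then 1 else 0) = 1 := by
    intro i
    have hi : i.val < m := i.isLt
    have : ∀ j, (i.val < m ∧ (c i).val + 1 = j + 1) ↔ ((c i).val = j) := by
      intro j; constructor
      · rintro ⟨_, h2⟩; omega
      · intro h2; exact ⟨hi, by omega⟩
    simp only [this]
    simp [Finset.sum_ite_eq, Finset.mem_range, (c i).isLt]
  rw [Finset.sum_congr rfl (fun i _ => h i)]
  simp

lemma cnt_anti {p : ℝ} {m N : ℕ} (c : Fin m → Fin N)
    (h : ∀ i, sp p c i ≠ 0) :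
    ∀ k, k ≤ m → ∀ j, cnt c k (j+2) ≤ cnt c k (j+1) := by
  intro k
  induction k with
  | zero => intro _ j; simp [cnt_zero]
  | succ k ih =>
    intro hk j
    have hkm : k < m := hk
    have ihk := ih (le_of_lt hkm)
    rw [cnt_succ c hkm, cnt_succ c hkm]
    by_cases h2 : (c ⟨k, hkm⟩).val + 1 = j + 2
    · have hx0 : (c ⟨k, hkm⟩).val ≠ 0 := by omega
      have hsp := h ⟨k, hkm⟩
      have hval : (⟨k, hkm⟩ : Fin m).val = k := rfl
      rw [sp, if_neg hx0, hval] at hsp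
      have hne : cnt c k ((c ⟨k, hkm⟩).val + 1) ≠ cnt c k (c ⟨k, hkm⟩).val := by
        intro he
        exact hsp (by rw [he]; ring)
      have hxj : (c ⟨k, hkm⟩).val = j + 1 := by omega
      rw [hxj] at hne
      have hne' : cnt c k (j+2) ≠ cnt c k (j+1) := hne
      rw [if_pos h2, if_neg (by omega)]
      have := ihk j
      omega
    · by_cases h1 : (c ⟨k, hkm⟩).val + 1 = j + 1
      · rw [if_neg h2, if_pos h1]
        have := ihk j
        omega
      · rw [if_neg h2, if_neg h1]
        have := ihk j
        omega

lemma cnt_top_zero {p : ℝ} {m N : ℕ} (c : Fin m → Fin N)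
    (h : ∀ i, sp p c i ≠ 0) (hmN : m < N) :
    cnt c m N = 0 := by
  by_contra h0
  have anti := cnt_anti (p := p) c h m le_rfl
  have chain : ∀ t j, cnt c m (j+1+t) ≤ cnt c m (j+1) := by
    intro t
    induction t with
    | zero => intro j; simp
    | succ t ih =>
      intro j
      have e1 : j+1+(t+1) = (j+t)+2 := by omega
      have e2 : (j+t)+1 = j+1+t := by omega
      calc cnt c m (j+1+(t+1)) = cnt c m ((j+t)+2) := by rw [e1]
        _ ≤ cnt c m ((j+t)+1) := anti (j+t)
        _ = cnt c m (j+1+t) := by rw [e2]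
        _ ≤ cnt c m (j+1) := ih j
  have hsum := sum_cnt c
  have hN : (N:ℕ) ≤ ∑ j ∈ Finset.range N, cnt c m (j+1) := by
    calc (N:ℕ) = ∑ _j ∈ Finset.range N, 1 := by simp
    _ ≤ _ := by
      refine Finset.sum_le_sum fun j hj => ?_
      have hj' := Finset.mem_range.mp hj
      have hle : cnt c m N ≤ cnt c m (j+1) := by
        have := chain (N-1-j) j
        have heq : j+1+(N-1-j) = N := by omega
        rwa [heq] at this
      omega
  omega

lemma telescope (A : ℕ → ℝ) : ∀ s, 1 ≤ s →
    (∑ t ∈ Finset.range s, (if t = 0 then A 1 else A (t+1) - A t)) = A s := by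
  intro s
  induction s with
  | zero => intro h; omega
  | succ s ih =>
    intro _
    rcases Nat.eq_zero_or_pos s with hs | hs
    · subst hs; simp
    · rw [Finset.sum_range_succ, ih hs, if_neg (by omega)]
      ring

lemma telescope' {p : ℝ} {m N : ℕ} (c' : Fin m → Fin N) : ∀ s, 1 ≤ s →
    (∑ t ∈ Finset.range s, (if t = 0 then p⁻¹ ^ cnt c' m 1
        else p⁻¹ ^ cnt c' m (t+1) - p⁻¹ ^ cnt c' m t)) = p⁻¹ ^ cnt c' m s :=
  fun s hs => telescope (fun j => p⁻¹ ^ cnt c' m j) s hs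

def snocEquiv (m N : ℕ) : ((Fin m → Fin N) × Fin N) ≃ (Fin (m+1) → Fin N) where
  toFun q := Fin.snoc q.1 q.2
  invFun c := (Fin.init c, c (Fin.last m))
  left_inv q := by simp [Fin.init_snoc, Fin.snoc_last]
  right_inv c := by simp [Fin.snoc_init_self]

lemma sum_decomp {M : Type*} [AddCommMonoid M] {m N : ℕ} (G : (Fin (m+1) → Fin N) → M) :
    (∑ c, G c) = ∑ c' : Fin m → Fin N, ∑ x : Fin N, G (Fin.snoc c' x) := by
  rw [← Fintype.sum_bijective (snocEquiv m N) (Equiv.bijective _)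
      (fun q => G (Fin.snoc q.1 q.2)) G (fun q => rfl)]
  exact Fintype.sum_prod_type _

lemma step0_sum {p : ℝ} (hp : 1 < p) {m N : ℕ} (c' : Fin m → Fin N) (hmN : m < N) :
    (∑ x : Fin N, (∏ i, sp p (Fin.snoc c' x) i)
        * p ^ (∑ j ∈ Finset.range 0, cnt (Fin.snoc c' x) (m+1) (j+1)))
    = (∏ i, sp p c' i) * p ^ (∑ j ∈ Finset.range 0, cnt c' m (j+1)) := by
  classical
  simp only [Finset.range_zero, Finset.sum_empty, pow_zero, mul_one]
  rw [Finset.sum_congr rfl fun x _ => prod_sp_snoc c' x, ← Finset.mul_sum]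
  by_cases hP0 : (∏ i, sp p c' i) = 0
  · rw [hP0]; ring
  have hall : ∀ i, sp p c' i ≠ 0 := fun i hi => hP0 (Finset.prod_eq_zero (Finset.mem_univ i) hi)
  have h0 : (∑ x : Fin N, (if (x:ℕ) = 0 then p⁻¹ ^ cnt c' m 1
          else p⁻¹ ^ cnt c' m ((x:ℕ)+1) - p⁻¹ ^ cnt c' m (x:ℕ)))
      = ∑ t ∈ Finset.range N, (if t = 0 then p⁻¹ ^ cnt c' m 1
          else p⁻¹ ^ cnt c' m (t+1) - p⁻¹ ^ cnt c' m t) :=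
    Fin.sum_univ_eq_sum_range (fun t => if t = 0 then p⁻¹ ^ cnt c' m 1
          else p⁻¹ ^ cnt c' m (t+1) - p⁻¹ ^ cnt c' m t) N
  rw [h0, telescope' c' N (by omega), cnt_top_zero (p := p) c' hall hmN, pow_zero, mul_one]

lemma step_sum {p : ℝ} (hp : 1 < p) {m N : ℕ} (c' : Fin m → Fin N) (hmN : m < N)
    {r : ℕ} (hr1 : 1 ≤ r) (hrN : r ≤ N) :
    (∑ x : Fin N, (∏ i, sp p (Fin.snoc c' x) i)
        * p ^ (∑ j ∈ Finset.range r, cnt (Fin.snoc c' x) (m+1) (j+1)))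
    = (p-1) * ((∏ i, sp p c' i) * p ^ (∑ j ∈ Finset.range (r-1), cnt c' m (j+1)))
      + (∏ i, sp p c' i) * p ^ (∑ j ∈ Finset.range r, cnt c' m (j+1)) := by
  classical
  obtain ⟨s, rfl⟩ : ∃ s, r = s + 1 := ⟨r - 1, by omega⟩
  simp only [Nat.add_sub_cancel]
  have hexp : ∀ x : Fin N, (∑ j ∈ Finset.range (s+1), cnt (Fin.snoc c' x) (m+1) (j+1))
      = (∑ j ∈ Finset.range (s+1), cnt c' m (j+1)) + (if (x:ℕ) < s+1 then 1 else 0) := by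
    intro x
    rw [Finset.sum_congr rfl fun j _ => cnt_snoc_top c' x (j+1), Finset.sum_add_distrib]
    congr 1
    have h1 : ∀ j, (((x:ℕ) + 1 = j + 1) ↔ ((x:ℕ) = j)) := fun j => by omega
    simp only [h1]
    simp [Finset.sum_ite_eq, Finset.mem_range]
  have hterm : ∀ x : Fin N,
      (∏ i, sp p (Fin.snoc c' x) i) * p ^ (∑ j ∈ Finset.range (s+1), cnt (Fin.snoc c' x) (m+1) (j+1))
      = (∏ i, sp p c' i) *
        ((if (x:ℕ) = 0 then p⁻¹ ^ cnt c' m 1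
            else p⁻¹ ^ cnt c' m ((x:ℕ)+1) - p⁻¹ ^ cnt c' m (x:ℕ))
          * (p ^ (∑ j ∈ Finset.range (s+1), cnt c' m (j+1)) * (if (x:ℕ) < s+1 then p else 1))) := by
    intro x
    rw [prod_sp_snoc, hexp x, pow_add]
    by_cases hx : (x:ℕ) < s+1
    · rw [if_pos hx, if_pos hx, pow_one]; ring
    · rw [if_neg hx, if_neg hx, pow_zero]; ring
  rw [Finset.sum_congr rfl fun x _ => hterm x, ← Finset.mul_sum]
  by_cases hP0 : (∏ i, sp p c' i) = 0
  · rw [hP0]; ring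
  have hall : ∀ i, sp p c' i ≠ 0 := fun i hi => hP0 (Finset.prod_eq_zero (Finset.mem_univ i) hi)
  have hAN : p⁻¹ ^ cnt c' m N = (1:ℝ) := by
    rw [cnt_top_zero (p := p) c' hall hmN, pow_zero]
  have h0 : (∑ x : Fin N, ((if (x:ℕ) = 0 then p⁻¹ ^ cnt c' m 1
            else p⁻¹ ^ cnt c' m ((x:ℕ)+1) - p⁻¹ ^ cnt c' m (x:ℕ))
          * (p ^ (∑ j ∈ Finset.range (s+1), cnt c' m (j+1)) * (if (x:ℕ) < s+1 then p else 1))))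
      = ∑ t ∈ Finset.range N, ((if t = 0 then p⁻¹ ^ cnt c' m 1
            else p⁻¹ ^ cnt c' m (t+1) - p⁻¹ ^ cnt c' m t)
          * (p ^ (∑ j ∈ Finset.range (s+1), cnt c' m (j+1)) * (if t < s+1 then p else 1))) :=
    Fin.sum_univ_eq_sum_range (fun t => (if t = 0 then p⁻¹ ^ cnt c' m 1
            else p⁻¹ ^ cnt c' m (t+1) - p⁻¹ ^ cnt c' m t)
          * (p ^ (∑ j ∈ Finset.range (s+1), cnt c' m (j+1)) * (if t < s+1 then p else 1))) N
  rw [h0]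
  have hsplit : ∀ t : ℕ, ((if t = 0 then p⁻¹ ^ cnt c' m 1
            else p⁻¹ ^ cnt c' m (t+1) - p⁻¹ ^ cnt c' m t)
          * (p ^ (∑ j ∈ Finset.range (s+1), cnt c' m (j+1)) * (if t < s+1 then p else 1)))
      = p ^ (∑ j ∈ Finset.range (s+1), cnt c' m (j+1)) *
          ((if t < s+1 then (p-1) * (if t = 0 then p⁻¹ ^ cnt c' m 1
              else p⁻¹ ^ cnt c' m (t+1) - p⁻¹ ^ cnt c' m t) else 0)
            + (if t = 0 then p⁻¹ ^ cnt c' m 1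
              else p⁻¹ ^ cnt c' m (t+1) - p⁻¹ ^ cnt c' m t)) := by
    intro t
    by_cases ht : t < s+1
    · rw [if_pos ht, if_pos ht]; ring
    · rw [if_neg ht, if_neg ht]; ring
  rw [Finset.sum_congr rfl fun t _ => hsplit t, ← Finset.mul_sum, Finset.sum_add_distrib]
  have h1 : (∑ t ∈ Finset.range N, (if t < s+1 then (p-1) * (if t = 0 then p⁻¹ ^ cnt c' m 1
              else p⁻¹ ^ cnt c' m (t+1) - p⁻¹ ^ cnt c' m t) else 0))
      = (p-1) * p⁻¹ ^ cnt c' m (s+1) := by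
    rw [← Finset.sum_subset (Finset.range_subset_range.mpr hrN)
        (fun t _ ht => if_neg (fun hlt => ht (Finset.mem_range.mpr hlt)))]
    rw [Finset.sum_congr rfl (fun t htm => if_pos (Finset.mem_range.mp htm)), ← Finset.mul_sum,
      telescope' c' (s+1) (by omega)]
  have h2 : (∑ t ∈ Finset.range N, (if t = 0 then p⁻¹ ^ cnt c' m 1
              else p⁻¹ ^ cnt c' m (t+1) - p⁻¹ ^ cnt c' m t)) = 1 := by
    rw [telescope' c' N (by omega), hAN]
  rw [h1, h2]
  have hSs : (∑ j ∈ Finset.range (s+1), cnt c' m (j+1))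
      = (∑ j ∈ Finset.range s, cnt c' m (j+1)) + cnt c' m (s+1) :=
    Finset.sum_range_succ _ s
  have hcancel : p ^ (∑ j ∈ Finset.range (s+1), cnt c' m (j+1)) * p⁻¹ ^ cnt c' m (s+1)
      = p ^ (∑ j ∈ Finset.range s, cnt c' m (j+1)) := by
    rw [hSs, pow_add, mul_assoc, ← mul_pow, mul_inv_cancel₀ (by linarith : p ≠ 0)]
    simp
  calc (∏ i, sp p c' i) * (p ^ (∑ j ∈ Finset.range (s+1), cnt c' m (j+1))
          * ((p-1) * p⁻¹ ^ cnt c' m (s+1) + 1))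
      = (p-1) * ((∏ i, sp p c' i) * (p ^ (∑ j ∈ Finset.range (s+1), cnt c' m (j+1))
          * p⁻¹ ^ cnt c' m (s+1)))
        + (∏ i, sp p c' i) * p ^ (∑ j ∈ Finset.range (s+1), cnt c' m (j+1)) := by ring
    _ = _ := by rw [hcancel]

lemma choose_identity (q : ℝ) (m : ℕ) : ∀ r : ℕ,
    q * (∑ k ∈ Finset.range r, q^k * ((m.choose k):ℝ))
      + (∑ k ∈ Finset.range (r+1), q^k * ((m.choose k):ℝ))
    = ∑ k ∈ Finset.range (r+1), q^k * (((m+1).choose k):ℝ) := by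
  intro r
  induction r with
  | zero => simp
  | succ r ih =>
    rw [Finset.sum_range_succ (fun k => q^k * ((m.choose k):ℝ)) r,
        Finset.sum_range_succ (fun k => q^k * ((m.choose k):ℝ)) (r+1),
        Finset.sum_range_succ (fun k => q^k * (((m+1).choose k):ℝ)) (r+1),
        ← ih]
    have h : ((m+1).choose (r+1) : ℝ) = (m.choose r : ℝ) + (m.choose (r+1) : ℝ) := by
      rw [Nat.choose_succ_succ]; push_cast; ring
    rw [h]
    ring

lemma main_sum {p : ℝ} (hp : 1 < p) {N : ℕ} :
    ∀ m, m ≤ N → ∀ r, r ≤ N →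
    (∑ c : Fin m → Fin N, (∏ i, sp p c i) * p ^ (∑ j ∈ Finset.range r, cnt c m (j+1)))
    = ∑ k ∈ Finset.range (r+1), (p-1)^k * ((m.choose k):ℝ) := by
  intro m
  induction m with
  | zero =>
    intro _ r _
    have hterm : ∀ c : Fin 0 → Fin N,
        (∏ i, sp p c i) * p ^ (∑ j ∈ Finset.range r, cnt c 0 (j+1)) = 1 := by
      intro c
      have : ∀ j ∈ Finset.range r, cnt c 0 (j+1) = 0 := fun j _ => cnt_zero c (j+1)
      rw [Finset.sum_congr rfl this]
      simp
    rw [Finset.sum_congr rfl fun c _ => hterm c, Finset.sum_const, Finset.card_univ]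
    have hcard : Fintype.card (Fin 0 → Fin N) = 1 := by simp
    rw [hcard]
    rw [Finset.sum_eq_single 0]
    · simp
    · intro k hk hk0
      rw [Nat.choose_eq_zero_of_lt (by omega)]
      simp
    · intro h
      exact absurd (Finset.mem_range.mpr (by omega)) h
  | succ m ih =>
    intro hm r hr
    have hmN : m < N := hm
    rcases Nat.eq_zero_or_pos r with rfl | hr1
    · calc (∑ c : Fin (m+1) → Fin N,
            (∏ i, sp p c i) * p ^ (∑ j ∈ Finset.range 0, cnt c (m+1) (j+1)))
          = ∑ c' : Fin m → Fin N,
            (∏ i, sp p c' i) * p ^ (∑ j ∈ Finset.range 0, cnt c' m (j+1)) :=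
            (sum_decomp _).trans (Finset.sum_congr rfl fun c' _ => step0_sum hp c' hmN)
        _ = ∑ k ∈ Finset.range 1, (p-1)^k * ((m.choose k):ℝ) := ih (le_of_lt hmN) 0 (by omega)
        _ = ∑ k ∈ Finset.range 1, (p-1)^k * (((m+1).choose k):ℝ) := by simp
    · calc (∑ c : Fin (m+1) → Fin N,
            (∏ i, sp p c i) * p ^ (∑ j ∈ Finset.range r, cnt c (m+1) (j+1)))
          = ∑ c' : Fin m → Fin N,
              ((p-1) * ((∏ i, sp p c' i) * p ^ (∑ j ∈ Finset.range (r-1), cnt c' m (j+1)))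
                + (∏ i, sp p c' i) * p ^ (∑ j ∈ Finset.range r, cnt c' m (j+1))) :=
            (sum_decomp _).trans (Finset.sum_congr rfl fun c' _ => step_sum hp c' hmN hr1 hr)
        _ = (p-1) * (∑ c' : Fin m → Fin N,
                (∏ i, sp p c' i) * p ^ (∑ j ∈ Finset.range (r-1), cnt c' m (j+1)))
            + (∑ c' : Fin m → Fin N,
                (∏ i, sp p c' i) * p ^ (∑ j ∈ Finset.range r, cnt c' m (j+1))) := by
            rw [Finset.sum_add_distrib, Finset.mul_sum]
        _ = (p-1) * (∑ k ∈ Finset.range ((r-1)+1), (p-1)^k * ((m.choose k):ℝ))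
            + (∑ k ∈ Finset.range (r+1), (p-1)^k * ((m.choose k):ℝ)) := by
            rw [ih (le_of_lt hmN) (r-1) (le_trans (Nat.sub_le r 1) hr),
              ih (le_of_lt hmN) r hr]
        _ = ∑ k ∈ Finset.range (r+1), (p-1)^k * (((m+1).choose k):ℝ) := by
            rw [show (r-1)+1 = r from by omega]
            exact choose_identity (p-1) m r

theorem borodin_expectation (p : ℝ) (hp : 1 < p) (n r : ℕ) (hr : 1 ≤ r) (hrn : r ≤ n) :
    ∑ c : Fin n → Fin n,
        (∏ i : Fin n, borodinStepProb p c i) *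
          ((p ^ (∑ j ∈ Finset.range r, borodinColCount c n (j + 1))
            - p ^ (∑ j ∈ Finset.range (r - 1), borodinColCount c n (j + 1))) / (p - 1))
      = (p - 1) ^ (r - 1) * (n.choose r) := by
  have hp1 : p - 1 ≠ 0 := sub_ne_zero_of_ne (ne_of_gt hp)
  obtain ⟨s, rfl⟩ : ∃ s, r = s + 1 := ⟨r - 1, by omega⟩
  simp only [Nat.add_sub_cancel, bsp_eq, bcc_eq]
  have hmain1 := main_sum hp n le_rfl (s+1) hrn
  have hmain2 := main_sum hp n le_rfl s (by omega)
  have hterm : ∀ c : Fin n → Fin n,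
      (∏ i, sp p c i) * ((p ^ (∑ j ∈ Finset.range (s+1), cnt c n (j+1))
        - p ^ (∑ j ∈ Finset.range s, cnt c n (j+1))) / (p-1))
      = ((∏ i, sp p c i) * p ^ (∑ j ∈ Finset.range (s+1), cnt c n (j+1))
        - (∏ i, sp p c i) * p ^ (∑ j ∈ Finset.range s, cnt c n (j+1))) * (p-1)⁻¹ := by
    intro c
    field_simp
  rw [Finset.sum_congr rfl fun c _ => hterm c, ← Finset.sum_mul, Finset.sum_sub_distrib,
    hmain1, hmain2, Finset.sum_range_succ (fun k => (p-1)^k * ((n.choose k):ℝ)) (s+1)]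
  have hps : (p-1)^(s+1) = (p-1)^s * (p-1) := pow_succ _ _
  field_simp
  ring
end
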